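/- arXiv:0712.4214 — 6 statements merged into one kernel-verified Lean document; each statement's English description precedes it below -/
import Mathlib

section
/- Let G, G̃ be real symmetric (n+1)×(n+1) matrices with eigenvalues λ₀ < 0 < λ₁ ≤ ... and λ̃₀ < 0 < λ̃₁ ≤ ..., such that λ₁ ≥ δ and λ̃₀ ≤ −δ for some δ > 0. Let p₀ and p̃₀ be unit eigenvectors for λ₀ and λ̃₀ respectively, with p̃₀·p₀ ≥ 0. Then |p̃₀ − p₀| ≤ |G̃ − G| / (δ√2). -/
open Matrix
open scoped RealInnerProductSpace

/-- The operator norm of a real matrix, acting on Euclidean space. -/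
noncomputable def matOpNorm {m : ℕ} (A : Matrix (Fin m) (Fin m) ℝ) : ℝ :=
  ‖Matrix.toEuclideanCLM (𝕜 := ℝ) A‖

/-- The action of a matrix on Euclidean space. -/
noncomputable def matAct {m : ℕ} (A : Matrix (Fin m) (Fin m) ℝ)
    (v : EuclideanSpace ℝ (Fin m)) : EuclideanSpace ℝ (Fin m) :=
  Matrix.toEuclideanCLM (𝕜 := ℝ) A v

/-!
Expand `p₀'` in the eigenbasis `p` of `G`, with coefficients `cᵢ = ⟪pᵢ, p₀'⟫`. The residual
`r = (G' - G) p₀' = μ₀' p₀' - G p₀'` has coefficients `(μ₀' - μᵢ) cᵢ`, and every eigenvalue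
`μᵢ` with `i ≠ 0` lies at distance at least `2δ` from `μ₀' ≤ -δ`, so
`(2δ)² (1 - c₀²) ≤ ‖r‖² ≤ ‖G' - G‖²`. On the other hand `c₀ ≥ 0` gives
`‖p₀' - p₀‖² = 2 - 2c₀ ≤ 2 (1 - c₀²)`.
-/

section Spectral

variable {ι E : Type*} [Fintype ι] [NormedAddCommGroup E] [InnerProductSpace ℝ E]
  {T : E →ₗ[ℝ] E} {μ : ι → ℝ}

theorem LinearMap.IsSymmetric.norm_apply_sub_smul_sq_eq_sum (hT : T.IsSymmetric)
    (b : OrthonormalBasis ι ℝ E) (hb : ∀ i, T (b i) = μ i • b i) (c : ℝ) (v : E) :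
    ‖T v - c • v‖ ^ 2 = ∑ i, ((μ i - c) * ⟪b i, v⟫) ^ 2 := by
  rw [← b.sum_sq_inner_right]
  refine Finset.sum_congr rfl fun i _ => ?_
  rw [inner_sub_right, ← hT, hb, real_inner_smul_left, real_inner_smul_right, sub_mul]

theorem LinearMap.IsSymmetric.sq_mul_one_sub_inner_sq_le (hT : T.IsSymmetric)
    (b : OrthonormalBasis ι ℝ E) (hb : ∀ i, T (b i) = μ i • b i) {c g : ℝ} {i₀ : ι}
    (hg : 0 ≤ g) (hgap : ∀ i ≠ i₀, g ≤ |μ i - c|) {v : E} (hv : ‖v‖ = 1) :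
    g ^ 2 * (1 - ⟪b i₀, v⟫ ^ 2) ≤ ‖T v - c • v‖ ^ 2 := by
  classical
  have hrest : 1 - ⟪b i₀, v⟫ ^ 2 = ∑ i ∈ Finset.univ.erase i₀, ⟪b i, v⟫ ^ 2 := by
    rw [← one_pow 2, ← hv, ← b.sum_sq_inner_right,
      ← Finset.add_sum_erase _ _ (Finset.mem_univ i₀), add_sub_cancel_left]
  calc g ^ 2 * (1 - ⟪b i₀, v⟫ ^ 2)
      = ∑ i ∈ Finset.univ.erase i₀, g ^ 2 * ⟪b i, v⟫ ^ 2 := by rw [hrest, Finset.mul_sum]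
    _ ≤ ∑ i ∈ Finset.univ.erase i₀, ((μ i - c) * ⟪b i, v⟫) ^ 2 := by
        refine Finset.sum_le_sum fun i hi => ?_
        rw [mul_pow, ← sq_abs (μ i - c)]
        gcongr
        exact hgap i (Finset.ne_of_mem_erase hi)
    _ ≤ ∑ i, ((μ i - c) * ⟪b i, v⟫) ^ 2 :=
        Finset.sum_le_sum_of_subset_of_nonneg (Finset.erase_subset _ _)
          fun _ _ _ => sq_nonneg _
    _ = ‖T v - c • v‖ ^ 2 := (hT.norm_apply_sub_smul_sq_eq_sum b hb c v).symm

end Spectral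

theorem norm_sub_sq_le_two_mul_one_sub_inner_sq {E : Type*} [NormedAddCommGroup E]
    [InnerProductSpace ℝ E] {u w : E} (hu : ‖u‖ = 1) (hw : ‖w‖ = 1) (h : 0 ≤ ⟪u, w⟫) :
    ‖u - w‖ ^ 2 ≤ 2 * (1 - ⟪u, w⟫ ^ 2) := by
  have hle : ⟪u, w⟫ ≤ 1 := by simpa [hu, hw] using real_inner_le_norm u w
  rw [norm_sub_sq_real, hu, hw]
  nlinarith

theorem matAct_eq_toEuclideanLin {m : ℕ} (A : Matrix (Fin m) (Fin m) ℝ)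
    (v : EuclideanSpace ℝ (Fin m)) : matAct A v = toEuclideanLin A v :=
  rfl

theorem matAct_sub {m : ℕ} (A B : Matrix (Fin m) (Fin m) ℝ) (v : EuclideanSpace ℝ (Fin m)) :
    matAct (A - B) v = matAct A v - matAct B v := by
  simp only [matAct, map_sub, _root_.sub_apply]

theorem norm_matAct_le {m : ℕ} (A : Matrix (Fin m) (Fin m) ℝ) (v : EuclideanSpace ℝ (Fin m)) :
    ‖matAct A v‖ ≤ matOpNorm A * ‖v‖ :=
  (toEuclideanCLM (𝕜 := ℝ) A).le_opNorm v

theorem eigenvector_stability_general (n : ℕ) (δ : ℝ) (hδ : 0 < δ)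
    (G G' : Matrix (Fin (n + 1)) (Fin (n + 1)) ℝ)
    (hG : G.IsHermitian)
    (p : Fin (n + 1) → EuclideanSpace ℝ (Fin (n + 1))) (μ : Fin (n + 1) → ℝ)
    (hp : Orthonormal ℝ p) (heig : ∀ i, matAct G (p i) = μ i • p i)
    (hmono : Monotone μ) (hμ1 : δ ≤ μ 1)
    (p₀' : EuclideanSpace ℝ (Fin (n + 1))) (μ₀' : ℝ)
    (hp₀' : ‖p₀'‖ = 1) (heig' : matAct G' p₀' = μ₀' • p₀') (hμ₀' : μ₀' ≤ -δ)
    (hdot : 0 ≤ ⟪p₀', p 0⟫) :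
    ‖p₀' - p 0‖ ≤ matOpNorm (G' - G) / (δ * Real.sqrt 2) := by
  obtain ⟨b, rfl⟩ : ∃ b : OrthonormalBasis (Fin (n + 1)) ℝ _, ⇑b = p :=
    ⟨.mk hp (hp.linearIndependent.span_eq_top_of_card_eq_finrank' (by simp)).ge,
      OrthonormalBasis.coe_mk _ _⟩
  have hgap : ∀ i ≠ 0, 2 * δ ≤ |μ i - μ₀'| := fun i hi =>
    le_abs.mpr (Or.inl (by linarith [hmono (Fin.one_le_of_ne_zero hi)]))
  have hres : ‖matAct (G' - G) p₀'‖ = ‖toEuclideanLin G p₀' - μ₀' • p₀'‖ := by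
    rw [matAct_sub, heig', norm_sub_rev, matAct_eq_toEuclideanLin]
  have hlow := (isSymmetric_toEuclideanLin_iff.mpr hG).sq_mul_one_sub_inner_sq_le b heig
    (by positivity) hgap hp₀'
  have hclose := norm_sub_sq_le_two_mul_one_sub_inner_sq hp₀' (b.orthonormal.1 0) hdot
  rw [real_inner_comm] at hclose
  have hop : ‖matAct (G' - G) p₀'‖ ≤ matOpNorm (G' - G) := by
    simpa [hp₀'] using norm_matAct_le (G' - G) p₀'
  rw [le_div_iff₀ (by positivity), ← pow_le_pow_iff_left₀ (by positivity)
    ((norm_nonneg _).trans hop) two_ne_zero]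
  calc (‖p₀' - b 0‖ * (δ * √2)) ^ 2 = 2 * δ ^ 2 * ‖p₀' - b 0‖ ^ 2 := by
        rw [mul_pow, mul_pow, Real.sq_sqrt zero_le_two]; ring
    _ ≤ 2 * δ ^ 2 * (2 * (1 - ⟪b 0, p₀'⟫ ^ 2)) := by gcongr
    _ = (2 * δ) ^ 2 * (1 - ⟪b 0, p₀'⟫ ^ 2) := by ring
    _ ≤ ‖matAct (G' - G) p₀'‖ ^ 2 := hres ▸ hlow
    _ ≤ matOpNorm (G' - G) ^ 2 := by gcongr

/-- If `G` has an orthonormal eigenbasis with increasingly ordered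
eigenvalues `μ 0 < 0 < δ ≤ μ 1 ≤ ...`, and `G'` has a unit eigenvector `p₀'` with
eigenvalue `≤ −δ`, normalized so that `p₀'·p₀ ≥ 0`, then
`|p₀' − p₀| ≤ |G' − G| / (δ √2)`. -/
theorem eigenvector_stability (n : ℕ) (hn : 1 ≤ n) (δ : ℝ) (hδ : 0 < δ)
    (G G' : Matrix (Fin (n + 1)) (Fin (n + 1)) ℝ)
    (hG : G.IsHermitian) (hG' : G'.IsHermitian)
    (p : Fin (n + 1) → EuclideanSpace ℝ (Fin (n + 1))) (μ : Fin (n + 1) → ℝ)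
    (hp : Orthonormal ℝ p) (heig : ∀ i, matAct G (p i) = μ i • p i)
    (hmono : Monotone μ) (hμ0 : μ 0 < 0) (hμ1 : δ ≤ μ 1)
    (p₀' : EuclideanSpace ℝ (Fin (n + 1))) (μ₀' : ℝ)
    (hp₀' : ‖p₀'‖ = 1) (heig' : matAct G' p₀' = μ₀' • p₀') (hμ₀' : μ₀' ≤ -δ)
    (hdot : 0 ≤ ⟪p₀', p 0⟫) :
    ‖p₀' - p 0‖ ≤ matOpNorm (G' - G) / (δ * Real.sqrt 2) :=
  eigenvector_stability_general n δ hδ G G' hG p μ hp heig hmono hμ1 p₀' μ₀' hp₀' heig' hμ₀' hdot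
end

section
/- Let G be a real symmetric matrix with eigenvalues λ₀ < 0 < λ₁ ≤ ..., unit eigenvector p₀ for λ₀, and let p̃₀ be a unit vector with G̃ p̃₀ = λ̃₀ p̃₀ where λ̃₀ < 0, writing p̃₀ = a p₀ + b w with |w| = 1, w·p₀ = 0, a,b ≥ 0. Then (λ₁ − λ̃₀) b ≤ |G̃ − G|. -/
open Matrix
open scoped RealInnerProductSpace

/-- Let `p₀` be a unit eigenvector of the symmetric matrix `G` for its
smallest eigenvalue `l₀ < 0`, with second smallest eigenvalue `l₁` (characterized by the
Rayleigh bound on the orthogonal complement of `p₀`).  Let `p₀' = a p₀ + b w` be a unit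
eigenvector of `G'` with eigenvalue `l₀' < 0`, where `w ⊥ p₀`, `|w| = 1`, `a, b ≥ 0`.
Then `(l₁ − l₀') b ≤ |G' − G|`. -/
theorem eigenvector_component_bound (n : ℕ)
    (G G' : Matrix (Fin (n + 1)) (Fin (n + 1)) ℝ)
    (hG : G.IsHermitian) (hG' : G'.IsHermitian)
    (p₀ p₀' w : EuclideanSpace ℝ (Fin (n + 1))) (l₀ l₀' l₁ a b : ℝ)
    (hp₀ : ‖p₀‖ = 1) (heig : matAct G p₀ = l₀ • p₀) (hl₀ : l₀ < 0)
    (hl₁ : ∀ v : EuclideanSpace ℝ (Fin (n + 1)), ⟪v, p₀⟫ = 0 →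
      l₁ * ‖v‖ ^ 2 ≤ ⟪matAct G v, v⟫)
    (hp₀' : ‖p₀'‖ = 1) (heig' : matAct G' p₀' = l₀' • p₀') (hl₀' : l₀' < 0)
    (hw : ‖w‖ = 1) (hwp : ⟪w, p₀⟫ = 0)
    (hdecomp : p₀' = a • p₀ + b • w) (ha : 0 ≤ a) (hb : 0 ≤ b) :
    (l₁ - l₀') * b ≤ matOpNorm (G' - G) := by
  have hTv : matAct (G' - G) p₀' = matAct G' p₀' - matAct G p₀' := by
    simp [matAct, map_sub]
  have hGp : matAct G p₀' = a • matAct G p₀ + b • matAct G w := by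
    rw [hdecomp, matAct, map_add]
    simp [matAct]
  have hip : ⟪w, p₀'⟫ = b := by
    rw [hdecomp, inner_add_right, real_inner_smul_right, real_inner_smul_right, hwp,
      real_inner_self_eq_norm_sq, hw]
    ring
  have hwGw : l₁ ≤ ⟪w, matAct G w⟫ := by
    have h := hl₁ w hwp
    rw [hw, real_inner_comm] at h
    linarith
  have hs : ⟪w, matAct (G' - G) p₀'⟫ = l₀' * b - b * ⟪w, matAct G w⟫ := by
    rw [hTv, heig', hGp, heig]
    rw [inner_sub_right, inner_add_right, real_inner_smul_right, real_inner_smul_right,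
      real_inner_smul_right, real_inner_smul_right, hip, hwp]
    ring
  have hb1 : (l₁ - l₀') * b ≤ -⟪w, matAct (G' - G) p₀'⟫ := by
    rw [hs]; nlinarith [hwGw]
  have hb2 : -⟪w, matAct (G' - G) p₀'⟫ ≤ ‖matAct (G' - G) p₀'‖ := by
    have h := abs_real_inner_le_norm w (matAct (G' - G) p₀')
    rw [hw, one_mul] at h
    have := neg_abs_le (⟪w, matAct (G' - G) p₀'⟫)
    linarith
  have hb3 : ‖matAct (G' - G) p₀'‖ ≤ matOpNorm (G' - G) := by
    have h := (Matrix.toEuclideanCLM (𝕜 := ℝ) (G' - G)).le_opNorm p₀'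
    rw [hp₀', mul_one] at h
    exact h
  linarith
end

section
/- Let p₁, ..., pₙ and ṽ₀ be unit vectors in ℝ^{n+1} such that p₁,...,pₙ are pairwise orthogonal, and apply Gram–Schmidt to (ṽ₀, p₁, ..., pₙ) obtaining orthonormal vectors ṽ₀, ṽ₁, ..., ṽₙ (assuming linear independence). If p₀ is a unit vector orthogonal to p₁,...,pₙ, then for each k = 1,...,n, |ṽ_k − p_k|² ≤ 2 ∑_{i=0}^{k-1} |ṽ_i − p_i|², and consequently |ṽ_k − p_k| ≤ 2^{n−1/2} |ṽ₀ − p₀|. -/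
/-!
With `s = ∑_{i<k} ⟪p k, w i⟫²`, the Gram–Schmidt vector `v k` satisfies
`‖v k‖² = ⟪p k, v k⟫ = 1 - s`, so `‖w k - p k‖² = 2 - 2‖v k‖ ≤ 2 - 2‖v k‖² = 2s`.
As `p k ⟂ p i`, each `⟪p k, w i⟫ = ⟪p k, w i - p i⟫` is at most `‖w i - p i‖`.
The recursion `e k ≤ 2 ∑_{i<k} e i` at most triples the partial sums at each step, whence
`e k ≤ 2 · 3^(k-1) e 0 ≤ 2^(2n-1) e 0`.
-/

open scoped RealInnerProductSpace
open Finset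

section

variable {E ι : Type*} [NormedAddCommGroup E] [InnerProductSpace ℝ E]

theorem real_inner_sum_inner_smul (x : E) (w : ι → E) (s : Finset ι) :
    ⟪x, ∑ i ∈ s, ⟪x, w i⟫ • w i⟫ = ∑ i ∈ s, ⟪x, w i⟫ ^ 2 := by
  simp only [inner_sum, real_inner_smul_right, sq]

theorem Orthonormal.norm_sum_smul_sq {w : ι → E} (hw : Orthonormal ℝ w) (c : ι → ℝ)
    (s : Finset ι) : ‖∑ i ∈ s, c i • w i‖ ^ 2 = ∑ i ∈ s, c i ^ 2 := by
  rw [← real_inner_self_eq_norm_sq, hw.inner_sum]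
  simp [sq]

theorem norm_inv_norm_smul_sub_sq_le {p v : E} (hp : ‖p‖ = 1) (hpv : ⟪p, v⟫ = ‖v‖ ^ 2) :
    ‖‖v‖⁻¹ • v - p‖ ^ 2 ≤ 2 * (1 - ‖v‖ ^ 2) := by
  rcases eq_or_ne v 0 with rfl | hv
  · simp [hp]
  have hv0 : ‖v‖ ≠ 0 := norm_ne_zero_iff.mpr hv
  have hv1 : ‖v‖ ≤ 1 := by
    have := real_inner_le_norm p v
    rw [hpv, hp, one_mul, sq] at this
    exact (mul_le_iff_le_one_left (norm_pos_iff.mpr hv)).mp this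
  have hwp : ⟪‖v‖⁻¹ • v, p⟫ = ‖v‖ := by
    rw [real_inner_smul_left, real_inner_comm, hpv, sq, inv_mul_cancel_left₀ hv0]
  rw [norm_sub_sq_real, norm_smul, norm_inv, norm_norm, inv_mul_cancel₀ hv0, hwp, hp]
  nlinarith [norm_nonneg v]

theorem Orthonormal.norm_gramSchmidt_step_sub_sq_le {w : ι → E} (hw : Orthonormal ℝ w)
    (s : Finset ι) {p v : E} (hp : ‖p‖ = 1) (hv : v = p - ∑ i ∈ s, ⟪p, w i⟫ • w i) :
    ‖‖v‖⁻¹ • v - p‖ ^ 2 ≤ 2 * ∑ i ∈ s, ⟪p, w i⟫ ^ 2 := by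
  have hnorm : ‖v‖ ^ 2 = 1 - ∑ i ∈ s, ⟪p, w i⟫ ^ 2 := by
    rw [hv, norm_sub_sq_real, real_inner_sum_inner_smul, hw.norm_sum_smul_sq, hp]
    ring
  have hpv : ⟪p, v⟫ = ‖v‖ ^ 2 := by
    rw [hnorm, hv, inner_sub_right, real_inner_sum_inner_smul, real_inner_self_eq_norm_sq, hp]
    ring
  simpa [hnorm] using norm_inv_norm_smul_sub_sq_le hp hpv

theorem real_inner_sq_le_norm_sub_sq {a b : E} (c : E) (ha : ‖a‖ = 1) (hab : ⟪a, b⟫ = 0) :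
    ⟪a, c⟫ ^ 2 ≤ ‖c - b‖ ^ 2 := by
  have : ⟪a, c⟫ = ⟪a, c - b⟫ := by rw [inner_sub_right, hab, sub_zero]
  rw [this, ← sq_abs]
  gcongr
  simpa [ha] using abs_real_inner_le_norm a (c - b)

end

open Fin.NatCast in
theorem Fin.sum_Iio_eq_sum_range {M : Type*} [AddCommMonoid M] {n : ℕ} (f : Fin (n + 1) → M)
    (k : Fin (n + 1)) : ∑ i ∈ Iio k, f i = ∑ j ∈ range k, f (j : Fin (n + 1)) := by
  rw [← Nat.Iio_eq_range, ← Fin.map_valEmbedding_Iio, sum_map]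
  simp

theorem le_two_mul_three_pow_mul_of_le_two_mul_sum {e : ℕ → ℝ} {n : ℕ}
    (he : ∀ k < n, e (k + 1) ≤ 2 * ∑ i ∈ range (k + 1), e i) :
    ∀ k < n, e (k + 1) ≤ 2 * 3 ^ k * e 0 := by
  have hsum : ∀ k < n + 1, ∑ i ∈ range (k + 1), e i ≤ 3 ^ k * e 0 := by
    intro k hk
    induction k with
    | zero => simp
    | succ k ih =>
      have := he k (by omega)
      rw [sum_range_succ, pow_succ]
      nlinarith [ih (by omega)]
  intro k hk
  nlinarith [he k hk, hsum k (by omega)]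

theorem two_mul_three_pow_le_rpow_sq {k n : ℕ} (hk : k < n) :
    2 * 3 ^ k ≤ ((2 : ℝ) ^ ((n : ℝ) - 1 / 2)) ^ 2 := by
  have hexp : ((n : ℝ) - 1 / 2) * (2 : ℕ) = ((2 * n : ℕ) : ℝ) - 1 := by push_cast; ring
  rw [← Real.rpow_mul_natCast (by norm_num), hexp, Real.rpow_sub (by norm_num), Real.rpow_natCast,
    Real.rpow_one, pow_mul]
  have h3 : (3 : ℝ) ^ k ≤ 4 ^ k := pow_le_pow_left₀ (by norm_num) (by norm_num) k
  have h4 : (4 : ℝ) ^ (k + 1) ≤ 4 ^ n := pow_le_pow_right₀ (by norm_num) hk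
  rw [pow_succ] at h4
  norm_num
  linarith

open Fin.NatCast in
theorem Fin.le_two_mul_three_pow_mul_of_le_two_mul_sum {n : ℕ} {e : Fin (n + 1) → ℝ}
    (he : ∀ k ≠ 0, e k ≤ 2 * ∑ i ∈ Iio k, e i) {k : Fin (n + 1)} (hk : k ≠ 0) :
    e k ≤ 2 * 3 ^ (k.val - 1) * e 0 := by
  have hrec := _root_.le_two_mul_three_pow_mul_of_le_two_mul_sum (e := fun m : ℕ ↦ e m) (n := n)
    fun j hj ↦ by
      have hval : (((j + 1 : ℕ) : Fin (n + 1)) : ℕ) = j + 1 := Fin.val_cast_of_lt (by omega)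
      have hne : ((j + 1 : ℕ) : Fin (n + 1)) ≠ 0 := fun h ↦ by simp [h] at hval
      have := he _ hne
      rwa [Fin.sum_Iio_eq_sum_range, hval] at this
  have hk1 : k.val - 1 + 1 = k.val := Nat.sub_add_cancel (Fin.pos_iff_ne_zero.mpr hk)
  simpa [hk1] using hrec (k.val - 1) (by omega)

theorem gram_schmidt_stability_general (n : ℕ)
    (p v w : Fin (n + 1) → EuclideanSpace ℝ (Fin (n + 1)))
    (hp : Orthonormal ℝ p) (hw : Orthonormal ℝ w)
    (hv : ∀ k : Fin (n + 1), k ≠ 0 →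
      v k = p k - ∑ i ∈ Finset.Iio k, ⟪p k, w i⟫ • w i)
    (hwk : ∀ k : Fin (n + 1), k ≠ 0 → w k = ‖v k‖⁻¹ • v k) :
    ∀ k : Fin (n + 1), k ≠ 0 →
      ‖w k - p k‖ ^ 2 ≤ 2 * ∑ i ∈ Finset.Iio k, ‖w i - p i‖ ^ 2 ∧
      ‖w k - p k‖ ≤ (2 : ℝ) ^ ((n : ℝ) - 1 / 2) * ‖w 0 - p 0‖ := by
  have hstep (k : Fin (n + 1)) (hk : k ≠ 0) :
      ‖w k - p k‖ ^ 2 ≤ 2 * ∑ i ∈ Iio k, ‖w i - p i‖ ^ 2 :=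
    calc ‖w k - p k‖ ^ 2 ≤ 2 * ∑ i ∈ Iio k, ⟪p k, w i⟫ ^ 2 := by
          rw [hwk k hk]
          exact hw.norm_gramSchmidt_step_sub_sq_le _ (hp.1 k) (hv k hk)
      _ ≤ 2 * ∑ i ∈ Iio k, ‖w i - p i‖ ^ 2 := by
          gcongr 2 * ∑ i ∈ _, ?_ with i hi
          exact real_inner_sq_le_norm_sub_sq _ (hp.1 k) (hp.2 (mem_Iio.mp hi).ne')
  intro k hk
  refine ⟨hstep k hk, ?_⟩
  have hk_le : k.val - 1 < n := by omega
  rw [← pow_le_pow_iff_left₀ (norm_nonneg _) (by positivity) two_ne_zero, mul_pow]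
  calc ‖w k - p k‖ ^ 2 ≤ 2 * 3 ^ (k.val - 1) * ‖w 0 - p 0‖ ^ 2 :=
        Fin.le_two_mul_three_pow_mul_of_le_two_mul_sum hstep hk
    _ ≤ ((2 : ℝ) ^ ((n : ℝ) - 1 / 2)) ^ 2 * ‖w 0 - p 0‖ ^ 2 := by
        gcongr
        exact two_mul_three_pow_le_rpow_sq hk_le

/-- Let `p 0, ..., p n` be an orthonormal family in `ℝ^{n+1}` and let
`w 0` be a unit vector.  Apply Gram–Schmidt to `(w 0, p 1, ..., p n)`, obtaining the
orthonormal vectors `w 0, w 1, ..., w n` (via `w k = v k / ‖v k‖` with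
`v k = p k − ∑_{i<k} ⟪p k, w i⟫ w i`).  Then for each `k ≠ 0`,
`‖w k − p k‖² ≤ 2 ∑_{i<k} ‖w i − p i‖²` and `‖w k − p k‖ ≤ 2^{n−1/2} ‖w 0 − p 0‖`. -/
theorem gram_schmidt_stability (n : ℕ)
    (p v w : Fin (n + 1) → EuclideanSpace ℝ (Fin (n + 1)))
    (hp : Orthonormal ℝ p) (hw : Orthonormal ℝ w)
    (hv : ∀ k : Fin (n + 1), k ≠ 0 →
      v k = p k - ∑ i ∈ Finset.Iio k, ⟪p k, w i⟫ • w i)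
    (hvne : ∀ k : Fin (n + 1), k ≠ 0 → v k ≠ 0)
    (hwk : ∀ k : Fin (n + 1), k ≠ 0 → w k = ‖v k‖⁻¹ • v k) :
    ∀ k : Fin (n + 1), k ≠ 0 →
      ‖w k - p k‖ ^ 2 ≤ 2 * ∑ i ∈ Finset.Iio k, ‖w i - p i‖ ^ 2 ∧
      ‖w k - p k‖ ≤ (2 : ℝ) ^ ((n : ℝ) - 1 / 2) * ‖w 0 - p 0‖ :=
  gram_schmidt_stability_general n p v w hp hw hv hwk
end

section
/- Fix 0 < ε ≤ 1 and let 𝕃_ε(n+1) be the set of real symmetric (n+1)×(n+1) matrices with exactly one negative eigenvalue, |det G| > ε, and operator norm |G| < ε⁻¹. For each G ∈ 𝕃_ε(n+1) there exists a map F: 𝕃_ε(n+1) → ℝ^{(n+1)×(n+1)} such that for every G̃ ∈ 𝕃_ε(n+1): G̃ = F(G̃)ᵀ η F(G̃), |F(G̃)| = |G̃|^{1/2}, and |F(G̃) − F(G)| ≤ C(ε,n) |G̃ − G| for a constant C(ε,n) independent of G. -/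
open Matrix

/-- The Minkowski matrix `η = diag(-1, 1, ..., 1)` of size `(n+1) × (n+1)`. -/
noncomputable def minkowskiEta (n : ℕ) : Matrix (Fin (n + 1)) (Fin (n + 1)) ℝ :=
  Matrix.diagonal (fun i => if i = 0 then (-1 : ℝ) else 1)

/-- The set `𝕃_ε(n+1)` of Lorentz matrices (symmetric, exactly one negative eigenvalue)
with `|det G| > ε` and operator norm `|G| < ε⁻¹`. -/
def lorentzSet (n : ℕ) (ε : ℝ) : Set (Matrix (Fin (n + 1)) (Fin (n + 1)) ℝ) :=
  {G | ∃ hG : G.IsHermitian,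
    (∃ j, hG.eigenvalues j < 0 ∧ ∀ i, i ≠ j → 0 < hG.eigenvalues i) ∧
    ε < |G.det| ∧ matOpNorm G < ε⁻¹}

/-!
Diagonalise `G = U diag(λ) Uᵀ` and let `R = |G|^{1/2}` and `s = sign G`, so that `G = R s R`.
A permutation moving the negative eigenvalue to index `0` turns `Uᵀ` into an orthogonal `O` with
`Oᵀ η O = s`; then `(X R)ᵀ η (X R) = G` whenever `X` is orthogonal with `Xᵀ η X = s`.

On `𝕃_ε(n+1)` every eigenvalue satisfies `ε^{n+1} ≤ |λ|`, so the Sylvester estimate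
`‖X‖ ≤ ‖P X + X Q‖ / (2a)` for `P, Q ≥ a` makes `|G|`, `R` and `s` Lipschitz in `G`.
Fix `G` with its `O` and put `F(G) = O s R`. When `s̃` is close to `s`, the orthogonal polar factor
`W` of `(s + s̃)/2` is symmetric with `W s W = s̃` and `‖W - s‖ ≤ 2 ‖s̃ - s‖`, and
`F(G̃) = O W R̃`. Otherwise `‖G̃ - G‖` is bounded below, and any factorisation of `G̃` will do since
all factors have norm at most `ε^{-1/2}`.
-/

open scoped Matrix.Norms.L2Operator RealInnerProductSpace

namespace Matrix

theorem IsHermitian.transpose_mul_mul_mul {ι : Type*} [Fintype ι] {X W : Matrix ι ι ℝ}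
    (hW : W.IsHermitian) (A : Matrix ι ι ℝ) : (X * W)ᵀ * A * (X * W) = W * (Xᵀ * A * X) * W := by
  rw [transpose_mul, ← conjTranspose_eq_transpose_of_trivial W, hW.eq]
  noncomm_ring

variable {ι : Type*} [Fintype ι] [DecidableEq ι]

theorem inner_toEuclideanCLM_mul_self (X : Matrix ι ι ℝ) (x y : EuclideanSpace ℝ ι) :
    ⟪toEuclideanCLM (𝕜 := ℝ) X x, toEuclideanCLM (𝕜 := ℝ) X y⟫ =
      ⟪toEuclideanCLM (𝕜 := ℝ) (Xᴴ * X) x, y⟫ := by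
  rw [map_mul, ← star_eq_conjTranspose, map_star, ContinuousLinearMap.star_eq_adjoint,
    ContinuousLinearMap.mul_def, ContinuousLinearMap.comp_apply,
    ContinuousLinearMap.adjoint_inner_left]

theorem PosSemidef.mul_norm_sq_le_inner {P : Matrix ι ι ℝ} {a : ℝ} (hP : (P - a • 1).PosSemidef)
    (x : EuclideanSpace ℝ ι) : a * ‖x‖ ^ 2 ≤ ⟪x, toEuclideanCLM (𝕜 := ℝ) P x⟫ := by
  have h := hP.dotProduct_mulVec_nonneg (WithLp.ofLp x)
  rw [star_trivial, ← inner_toEuclideanCLM] at h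
  simpa [inner_sub_right, inner_smul_right, real_inner_self_eq_norm_sq] using h

theorem IsHermitian.exists_eigenvector_of_mem_spectrum {A : Matrix ι ι ℝ} (hA : A.IsHermitian)
    {x : ℝ} (hx : x ∈ spectrum ℝ A) :
    ∃ v : EuclideanSpace ℝ ι, ‖v‖ = 1 ∧ toEuclideanCLM (𝕜 := ℝ) A v = x • v := by
  obtain ⟨i, rfl⟩ := hA.spectrum_real_eq_range_eigenvalues ▸ hx
  refine ⟨hA.eigenvectorBasis i, hA.eigenvectorBasis.orthonormal.1 i, ?_⟩
  apply WithLp.ofLp_injective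
  simpa using hA.mulVec_eigenvectorBasis i

theorem exists_eigenvector_conjTranspose_mul_self [Nonempty ι] (X : Matrix ι ι ℝ) :
    ∃ v : EuclideanSpace ℝ ι, ‖v‖ = 1 ∧
      toEuclideanCLM (𝕜 := ℝ) (Xᴴ * X) v = (‖X‖ ^ 2) • v := by
  have hS : (Xᴴ * X).IsHermitian := isHermitian_conjTranspose_mul_self X
  obtain ⟨⟨x, hx, hxS⟩, -⟩ := IsometricContinuousFunctionalCalculus.isGreatest_norm_spectrum
    (𝕜 := ℝ) (Xᴴ * X) hS.isSelfAdjoint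
  obtain ⟨v, hv, hSv⟩ := hS.exists_eigenvector_of_mem_spectrum hx
  have hx0 : 0 ≤ x := by
    have h := inner_toEuclideanCLM_mul_self X v v
    rw [hSv, real_inner_smul_left, real_inner_self_eq_norm_sq v, hv, one_pow, mul_one] at h
    exact h ▸ real_inner_self_nonneg
  simp only [Real.norm_of_nonneg hx0] at hxS
  exact ⟨v, hv, by rw [hSv, sq, ← l2_opNorm_conjTranspose_mul_self, hxS]⟩

theorem norm_le_of_mul_add_mul_eq {P Q X R : Matrix ι ι ℝ} {a : ℝ} (ha : 0 < a)
    (hP : (P - a • 1).PosSemidef) (hQ : (Q - a • 1).PosSemidef) (hR : P * X + X * Q = R) :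
    ‖X‖ ≤ ‖R‖ / (2 * a) := by
  rcases isEmpty_or_nonempty ι with hι | hι
  · simpa [Subsingleton.elim X 0] using by positivity
  -- Test `R = P X + X Q` against a top right singular vector `v` of `X` and against `X v`.
  obtain ⟨v, hv, hXv⟩ := exists_eigenvector_conjTranspose_mul_self X
  set T := toEuclideanCLM (n := ι) (𝕜 := ℝ)
  have hXX (y) : ⟪T X v, T X y⟫ = ‖X‖ ^ 2 * ⟪v, y⟫ := by
    rw [inner_toEuclideanCLM_mul_self, hXv, inner_smul_left]; rfl
  have hnorm : ‖T X v‖ = ‖X‖ := by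
    rw [← sq_eq_sq₀ (norm_nonneg _) (norm_nonneg _), ← real_inner_self_eq_norm_sq, hXX,
      real_inner_self_eq_norm_sq, hv, one_pow, mul_one]
  have hlower : 2 * a * ‖X‖ ^ 2 ≤ ⟪T X v, T R v⟫ := by
    have hPX := hP.mul_norm_sq_le_inner (T X v)
    have hQv := hQ.mul_norm_sq_le_inner v
    rw [hnorm] at hPX
    rw [hv, one_pow, mul_one] at hQv
    rw [← hR, map_add, map_mul, map_mul, _root_.add_apply, inner_add_right,
      ContinuousLinearMap.mul_def, ContinuousLinearMap.mul_def, ContinuousLinearMap.comp_apply,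
      ContinuousLinearMap.comp_apply, hXX]
    nlinarith [sq_nonneg ‖X‖]
  have hupper : ⟪T X v, T R v⟫ ≤ ‖X‖ * ‖R‖ :=
    calc ⟪T X v, T R v⟫ ≤ ‖T X v‖ * ‖T R v‖ := real_inner_le_norm _ _
      _ ≤ ‖X‖ * (‖R‖ * ‖v‖) := by rw [hnorm]; gcongr; exact (T R).le_opNorm v
      _ = ‖X‖ * ‖R‖ := by rw [hv, mul_one]
  rw [le_div_iff₀ (by positivity)]
  nlinarith [norm_nonneg X, norm_nonneg R]

theorem norm_sub_le_norm_mul_self_sub_div {P Q : Matrix ι ι ℝ} {a : ℝ} (ha : 0 < a)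
    (hP : (P - a • 1).PosSemidef) (hQ : (Q - a • 1).PosSemidef) :
    ‖P - Q‖ ≤ ‖P * P - Q * Q‖ / (2 * a) :=
  norm_le_of_mul_add_mul_eq ha hP hQ (by noncomm_ring)

theorem norm_mul_self_sub_mul_self_le (A B : Matrix ι ι ℝ) :
    ‖A * A - B * B‖ ≤ (‖A‖ + ‖B‖) * ‖A - B‖ :=
  calc ‖A * A - B * B‖ = ‖A * (A - B) + (A - B) * B‖ := by congr 1; noncomm_ring
    _ ≤ ‖A‖ * ‖A - B‖ + ‖A - B‖ * ‖B‖ := norm_add_le_of_le (norm_mul_le _ _) (norm_mul_le _ _)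
    _ = (‖A‖ + ‖B‖) * ‖A - B‖ := by ring

theorem l2_opNorm_one_le : ‖(1 : Matrix ι ι ℝ)‖ ≤ 1 := by
  rw [← diagonal_one, l2_opNorm_diagonal]
  exact pi_norm_const_le (1 : ℝ) |>.trans norm_one.le

theorem IsHermitian.norm_le_one_of_mul_self_eq_one {s : Matrix ι ι ℝ} (hs : s.IsHermitian)
    (hss : s * s = 1) : ‖s‖ ≤ 1 := by
  have h : ‖s‖ ^ 2 ≤ 1 := hs.isSelfAdjoint.norm_mul_self ▸ hss ▸ l2_opNorm_one_le
  nlinarith [norm_nonneg s]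

theorem IsHermitian.mem_orthogonalGroup_of_mul_self_eq_one {s : Matrix ι ι ℝ}
    (hs : s.IsHermitian) (hss : s * s = 1) : s ∈ orthogonalGroup ι ℝ := by
  rw [mem_orthogonalGroup_iff, ← conjTranspose_eq_transpose_of_trivial, hs.eq, hss]

theorem cfc_mul_real (f g : ℝ → ℝ) (A : Matrix ι ι ℝ) :
    cfc (fun x => f x * g x) A = cfc f A * cfc g A :=
  cfc_mul f g A ((Set.toFinite _).continuousOn f) ((Set.toFinite _).continuousOn g)

theorem IsHermitian.cfc_eq_self {A : Matrix ι ι ℝ} (hA : A.IsHermitian) {f : ℝ → ℝ}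
    (hf : ∀ x ∈ spectrum ℝ A, f x = x) : cfc f A = A :=
  (cfc_congr hf).trans (cfc_id' ℝ A hA.isSelfAdjoint)

theorem IsHermitian.cfc_eq_one {A : Matrix ι ι ℝ} (hA : A.IsHermitian) {f : ℝ → ℝ}
    (hf : ∀ x ∈ spectrum ℝ A, f x = 1) : cfc f A = 1 :=
  (cfc_congr hf).trans (cfc_const_one ℝ A hA.isSelfAdjoint)

open scoped MatrixOrder in
theorem IsHermitian.posSemidef_cfc_sub_smul {A : Matrix ι ι ℝ} (hA : A.IsHermitian)
    {f : ℝ → ℝ} {c : ℝ} (h : ∀ x ∈ spectrum ℝ A, c ≤ f x) : (cfc f A - c • 1).PosSemidef := by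
  rw [← Algebra.algebraMap_eq_smul_one, ← cfc_const c A hA.isSelfAdjoint,
    ← cfc_sub f _ A ((Set.toFinite _).continuousOn f) ((Set.toFinite _).continuousOn _)]
  exact nonneg_iff_posSemidef.1 (cfc_nonneg fun x hx => sub_nonneg.2 (h x hx))

section SpectralFunctions

variable {G : Matrix ι ι ℝ} (hG : G.IsHermitian)
include hG

theorem IsHermitian.cfc_abs_mul_self :
    cfc (fun x : ℝ => |x|) G * cfc (fun x : ℝ => |x|) G = G * G := by
  rw [← cfc_mul_real]
  conv_rhs => rw [← cfc_id' ℝ G hG.isSelfAdjoint]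
  rw [← cfc_mul_real]
  exact cfc_congr fun x _ => abs_mul_abs_self x

theorem IsHermitian.cfc_sqrt_abs_mul_cfc_sign_mul :
    cfc (fun x => √|x|) G * cfc Real.sign G * cfc (fun x => √|x|) G = G := by
  rw [← cfc_mul_real, ← cfc_mul_real]
  refine hG.cfc_eq_self fun x _ => ?_
  rw [mul_right_comm, Real.mul_self_sqrt (abs_nonneg x)]
  rcases lt_trichotomy x 0 with h | rfl | h
  · rw [Real.sign_of_neg h, abs_of_neg h]; ring
  · simp
  · rw [Real.sign_of_pos h, abs_of_pos h, mul_one]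

theorem IsHermitian.norm_cfc_sqrt_abs : ‖cfc (fun x => √|x|) G‖ = √‖G‖ := by
  have hsa (f : ℝ → ℝ) : ‖cfc f G * cfc f G‖ = ‖cfc f G‖ ^ 2 :=
    (cfc_predicate f G : IsSelfAdjoint _).norm_mul_self
  have habs : ‖cfc (fun x : ℝ => |x|) G‖ = ‖G‖ := by
    rw [← sq_eq_sq₀ (norm_nonneg _) (norm_nonneg _), ← hsa, hG.cfc_abs_mul_self,
      hG.isSelfAdjoint.norm_mul_self]
  rw [eq_comm, Real.sqrt_eq_iff_mul_self_eq (norm_nonneg _) (norm_nonneg _), ← habs, ← sq, ← hsa,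
    ← cfc_mul_real]
  exact congrArg _ (cfc_congr fun x _ => (Real.mul_self_sqrt (abs_nonneg x)).symm)

theorem IsHermitian.cfc_sign_mul_self (h0 : ∀ x ∈ spectrum ℝ G, x ≠ 0) :
    cfc Real.sign G * cfc Real.sign G = 1 := by
  rw [← cfc_mul_real]
  refine hG.cfc_eq_one fun x hx => ?_
  rcases Real.sign_apply_eq_of_ne_zero x (h0 x hx) with h | h <;> rw [h] <;> norm_num

variable {a : ℝ} (ha : 0 < a) (hGa : ∀ x ∈ spectrum ℝ G, a ≤ |x|)
include ha hGa

theorem IsHermitian.cfc_sign_eq_mul_cfc_inv_abs :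
    cfc Real.sign G = G * cfc (fun x : ℝ => |x|⁻¹) G := by
  conv_rhs => enter [1]; rw [← cfc_id' ℝ G hG.isSelfAdjoint]
  rw [← cfc_mul_real]
  refine cfc_congr fun x hx => ?_
  rcases lt_or_gt_of_ne (abs_pos.1 (ha.trans_le (hGa x hx))) with h | h
  · rw [Real.sign_of_neg h, abs_of_neg h, inv_neg, mul_neg, mul_inv_cancel₀ h.ne]
  · rw [Real.sign_of_pos h, abs_of_pos h, mul_inv_cancel₀ h.ne']

theorem IsHermitian.cfc_inv_abs_mul_cfc_abs :
    cfc (fun x : ℝ => |x|⁻¹) G * cfc (fun x : ℝ => |x|) G = 1 := by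
  rw [← cfc_mul_real]
  exact hG.cfc_eq_one fun x hx => inv_mul_cancel₀ (ha.trans_le (hGa x hx)).ne'

end SpectralFunctions

theorem norm_cfc_inv_abs_le {G : Matrix ι ι ℝ} {a : ℝ} (ha : 0 < a)
    (hGa : ∀ x ∈ spectrum ℝ G, a ≤ |x|) : ‖cfc (fun x : ℝ => |x|⁻¹) G‖ ≤ a⁻¹ :=
  norm_cfc_le (by positivity) fun x hx => by
    rw [Real.norm_of_nonneg (by positivity)]; exact inv_anti₀ ha (hGa x hx)

section Lipschitz

variable {G G' : Matrix ι ι ℝ} (hG : G.IsHermitian) (hG' : G'.IsHermitian) {a : ℝ} (ha : 0 < a)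
  (hGa : ∀ x ∈ spectrum ℝ G, a ≤ |x|) (hG'a : ∀ x ∈ spectrum ℝ G', a ≤ |x|)
include hG hG' ha hGa hG'a

theorem norm_cfc_abs_sub_le :
    ‖cfc (fun x : ℝ => |x|) G' - cfc (fun x : ℝ => |x|) G‖ ≤
      (‖G'‖ + ‖G‖) / (2 * a) * ‖G' - G‖ :=
  calc ‖cfc (fun x : ℝ => |x|) G' - cfc (fun x : ℝ => |x|) G‖
        ≤ ‖G' * G' - G * G‖ / (2 * a) := by
        rw [← hG.cfc_abs_mul_self, ← hG'.cfc_abs_mul_self]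
        exact norm_sub_le_norm_mul_self_sub_div ha (hG'.posSemidef_cfc_sub_smul hG'a)
          (hG.posSemidef_cfc_sub_smul hGa)
    _ ≤ (‖G'‖ + ‖G‖) * ‖G' - G‖ / (2 * a) := by gcongr; exact norm_mul_self_sub_mul_self_le _ _
    _ = (‖G'‖ + ‖G‖) / (2 * a) * ‖G' - G‖ := by ring

theorem norm_cfc_sqrt_abs_sub_le :
    ‖cfc (fun x => √|x|) G' - cfc (fun x => √|x|) G‖ ≤
      ‖cfc (fun x : ℝ => |x|) G' - cfc (fun x : ℝ => |x|) G‖ / (2 * √a) := by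
  have hsq (A : Matrix ι ι ℝ) :
      cfc (fun x => √|x|) A * cfc (fun x => √|x|) A = cfc (fun x : ℝ => |x|) A := by
    rw [← cfc_mul_real]; exact cfc_congr fun x _ => Real.mul_self_sqrt (abs_nonneg x)
  rw [← hsq G, ← hsq G']
  exact norm_sub_le_norm_mul_self_sub_div (Real.sqrt_pos.2 ha)
    (hG'.posSemidef_cfc_sub_smul fun x hx => Real.sqrt_le_sqrt (hG'a x hx))
    (hG.posSemidef_cfc_sub_smul fun x hx => Real.sqrt_le_sqrt (hGa x hx))

theorem norm_cfc_sign_sub_le :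
    ‖cfc Real.sign G' - cfc Real.sign G‖ ≤
      ‖G' - G‖ / a + ‖G‖ * ‖cfc (fun x : ℝ => |x|) G' - cfc (fun x : ℝ => |x|) G‖ / a ^ 2 := by
  set I := cfc (fun x : ℝ => |x|⁻¹) G
  set I' := cfc (fun x : ℝ => |x|⁻¹) G'
  have hdiff : I' - I = I' * (cfc (fun x : ℝ => |x|) G - cfc (fun x : ℝ => |x|) G') * I := by
    rw [mul_sub, sub_mul, hG'.cfc_inv_abs_mul_cfc_abs ha hG'a, one_mul, mul_assoc,
      (cfc_commute_cfc _ _ G).eq, hG.cfc_inv_abs_mul_cfc_abs ha hGa, mul_one]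
  have hI'I : ‖I' - I‖ ≤ ‖cfc (fun x : ℝ => |x|) G' - cfc (fun x : ℝ => |x|) G‖ / a ^ 2 :=
    calc ‖I' - I‖ ≤ ‖I'‖ * ‖cfc (fun x : ℝ => |x|) G - cfc (fun x : ℝ => |x|) G'‖ * ‖I‖ :=
          hdiff ▸ norm_mul₃_le
      _ ≤ a⁻¹ * ‖cfc (fun x : ℝ => |x|) G' - cfc (fun x : ℝ => |x|) G‖ * a⁻¹ := by
          rw [norm_sub_rev]; gcongr
          exacts [norm_cfc_inv_abs_le ha hG'a, norm_cfc_inv_abs_le ha hGa]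
      _ = _ := by ring
  calc ‖cfc Real.sign G' - cfc Real.sign G‖ = ‖(G' - G) * I' + G * (I' - I)‖ := by
        rw [hG.cfc_sign_eq_mul_cfc_inv_abs ha hGa, hG'.cfc_sign_eq_mul_cfc_inv_abs ha hG'a]
        congr 1; noncomm_ring
    _ ≤ ‖G' - G‖ * ‖I'‖ + ‖G‖ * ‖I' - I‖ := norm_add_le_of_le (norm_mul_le _ _) (norm_mul_le _ _)
    _ ≤ ‖G' - G‖ * a⁻¹ +
          ‖G‖ * (‖cfc (fun x : ℝ => |x|) G' - cfc (fun x : ℝ => |x|) G‖ / a ^ 2) := by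
        gcongr; exact norm_cfc_inv_abs_le ha hG'a
    _ = _ := by ring

end Lipschitz

section Involution

variable {s : Matrix ι ι ℝ} (hs : s.IsHermitian) (hss : s * s = 1)
include hs hss

theorem mul_norm_le_norm_toEuclideanCLM_of_involution (M : Matrix ι ι ℝ)
    (v : EuclideanSpace ℝ ι) : (1 - ‖M - s‖) * ‖v‖ ≤ ‖toEuclideanCLM (𝕜 := ℝ) M v‖ := by
  set T := toEuclideanCLM (n := ι) (𝕜 := ℝ)
  have hv : ‖v‖ ≤ ‖T s v‖ :=
    calc ‖v‖ = ‖T s (T s v)‖ := by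
          rw [← ContinuousLinearMap.comp_apply, ← ContinuousLinearMap.mul_def, ← map_mul, hss,
            map_one, one_apply_eq_self]
      _ ≤ ‖s‖ * ‖T s v‖ := (T s).le_opNorm _
      _ ≤ ‖T s v‖ := mul_le_of_le_one_left (norm_nonneg _) (hs.norm_le_one_of_mul_self_eq_one hss)
  have hsM : ‖T s v‖ ≤ ‖T M v‖ + ‖M - s‖ * ‖v‖ :=
    calc ‖T s v‖ = ‖T M v - T (M - s) v‖ := by rw [map_sub, _root_.sub_apply, sub_sub_cancel]
      _ ≤ ‖T M v‖ + ‖T (M - s) v‖ := norm_sub_le _ _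
      _ ≤ ‖T M v‖ + ‖M - s‖ * ‖v‖ := by gcongr; exact (T (M - s)).le_opNorm v
  linarith

theorem sq_le_of_mem_spectrum_mul_self_of_involution {M : Matrix ι ι ℝ} (hM : M.IsHermitian)
    (hMs : ‖M - s‖ ≤ 1) {y : ℝ} (hy : y ∈ spectrum ℝ (M * M)) : (1 - ‖M - s‖) ^ 2 ≤ y := by
  have hS : (M * M).IsHermitian := by
    simpa only [hM.eq] using isHermitian_conjTranspose_mul_self M
  obtain ⟨v, hv, hSv⟩ := hS.exists_eigenvector_of_mem_spectrum hy
  have hy : y = ‖toEuclideanCLM (𝕜 := ℝ) M v‖ ^ 2 := by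
    have h := inner_toEuclideanCLM_mul_self M v v
    rw [hM.eq, hSv, real_inner_smul_left, real_inner_self_eq_norm_sq v, hv, one_pow, mul_one,
      real_inner_self_eq_norm_sq] at h
    exact h.symm
  have h := mul_norm_le_norm_toEuclideanCLM_of_involution hs hss M v
  rw [hv, mul_one] at h
  rw [hy]
  exact pow_le_pow_left₀ (by linarith) h 2

end Involution

section InvSqrt

variable {S : Matrix ι ι ℝ} (hS : S.IsHermitian) {c : ℝ} (hc : 0 < c)
  (hspec : ∀ y ∈ spectrum ℝ S, c ^ 2 ≤ y)
include hS hc hspec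

theorem IsHermitian.mul_cfc_inv_sqrt_mul_self :
    S * (cfc (fun y => (√y)⁻¹) S * cfc (fun y => (√y)⁻¹) S) = 1 := by
  conv_lhs => enter [1]; rw [← cfc_id' ℝ S hS.isSelfAdjoint]
  rw [← cfc_mul_real, ← cfc_mul_real]
  refine hS.cfc_eq_one fun y hy => ?_
  have hy0 : 0 < y := (pow_pos hc 2).trans_le (hspec y hy)
  field_simp
  rw [Real.sq_sqrt hy0.le]

theorem IsHermitian.norm_cfc_inv_sqrt_sub_one_le (hc1 : c ≤ 1) :
    ‖cfc (fun y => (√y)⁻¹) S - 1‖ ≤ ‖S - 1‖ / (2 * c ^ 2) := by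
  set P := cfc (fun y => (√y)⁻¹) S
  set Q := cfc (fun y => √y) S
  have hsqrt : ∀ y ∈ spectrum ℝ S, c ≤ √y := fun y hy => Real.le_sqrt_of_sq_le (hspec y hy)
  have hQ : (Q - c • 1).PosSemidef := hS.posSemidef_cfc_sub_smul hsqrt
  have hone : ((1 : Matrix ι ι ℝ) - c • 1).PosSemidef := by
    rw [← one_smul ℝ (1 : Matrix ι ι ℝ), smul_smul, mul_one, ← sub_smul]
    exact PosSemidef.one.smul (sub_nonneg.2 hc1)
  have hQQ : Q * Q = S := by
    rw [← cfc_mul_real]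
    exact hS.cfc_eq_self fun y hy => Real.mul_self_sqrt ((sq_nonneg c).trans (hspec y hy))
  have hPQ : P * Q = 1 := by
    rw [← cfc_mul_real]
    exact hS.cfc_eq_one fun y hy => inv_mul_cancel₀ (hc.trans_le (hsqrt y hy)).ne'
  have hP : ‖P‖ ≤ c⁻¹ := norm_cfc_le (by positivity) fun y hy => by
    rw [Real.norm_of_nonneg (by positivity)]
    exact inv_anti₀ hc (hsqrt y hy)
  calc ‖P - 1‖ = ‖P * (1 - Q)‖ := by rw [mul_sub, mul_one, hPQ]
    _ ≤ c⁻¹ * ‖Q - 1‖ := by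
        rw [norm_sub_rev Q]; exact (norm_mul_le _ _).trans (by gcongr)
    _ ≤ c⁻¹ * (‖S - 1‖ / (2 * c)) := by
        gcongr; simpa [hQQ] using norm_sub_le_norm_mul_self_sub_div hc hQ hone
    _ = ‖S - 1‖ / (2 * c ^ 2) := by field_simp

end InvSqrt

theorem IsHermitian.polar_conj_of_mul_eq_mul {M s s' : Matrix ι ι ℝ} (hM : M.IsHermitian)
    (hMs : M * s = s' * M) (hsM : s * M = M * s') {c : ℝ} (hc : 0 < c)
    (hspec : ∀ y ∈ spectrum ℝ (M * M), c ^ 2 ≤ y) :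
    (M * cfc (fun y => (√y)⁻¹) (M * M)).IsHermitian ∧
      M * cfc (fun y => (√y)⁻¹) (M * M) * (M * cfc (fun y => (√y)⁻¹) (M * M)) = 1 ∧
      M * cfc (fun y => (√y)⁻¹) (M * M) * s * (M * cfc (fun y => (√y)⁻¹) (M * M)) = s' := by
  have hS : (M * M).IsHermitian := by
    simpa only [hM.eq] using isHermitian_conjTranspose_mul_self M
  set P := cfc (fun y => (√y)⁻¹) (M * M)
  have hPs : Commute P s := Commute.cfc_real (by
    show M * M * s = s * (M * M)
    rw [mul_assoc, hMs, ← mul_assoc, ← hsM, mul_assoc]) _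
  have hPM : Commute P M := Commute.cfc_real ((Commute.refl M).mul_left (Commute.refl M)) _
  have hMMPP : M * M * (P * P) = 1 := hS.mul_cfc_inv_sqrt_mul_self hc hspec
  refine ⟨?_, ?_, ?_⟩
  · have hP : P.IsHermitian := cfc_predicate _ (M * M)
    rw [IsHermitian, conjTranspose_mul, hM.eq, hP.eq, hPM.eq]
  · calc M * P * (M * P) = M * (P * M) * P := by noncomm_ring
      _ = M * M * (P * P) := by rw [hPM.eq]; noncomm_ring
      _ = 1 := hMMPP
  · calc M * P * s * (M * P) = M * (P * s) * M * P := by noncomm_ring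
      _ = M * s * (P * M) * P := by rw [hPs.eq]; noncomm_ring
      _ = s' * (M * M * (P * P)) := by rw [hPM.eq, hMs]; noncomm_ring
      _ = s' := by rw [hMMPP, mul_one]

theorem exists_isHermitian_conj_of_involution {s s' : Matrix ι ι ℝ} (hs : s.IsHermitian)
    (hs' : s'.IsHermitian) (hss : s * s = 1) (hss' : s' * s' = 1) (hclose : ‖s' - s‖ ≤ 1 / 2) :
    ∃ W : Matrix ι ι ℝ, W.IsHermitian ∧ W * W = 1 ∧ W * s * W = s' ∧ ‖W - s‖ ≤ 2 * ‖s' - s‖ := by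
  have hs1 := hs.norm_le_one_of_mul_self_eq_one hss
  set M := (1 / 2 : ℝ) • (s + s')
  have hM : M.IsHermitian := (hs.add hs').smul (.all _)
  have hMs : ‖M - s‖ = ‖s' - s‖ / 2 := by
    rw [show M - s = (1 / 2 : ℝ) • (s' - s) by module, norm_smul]; norm_num; ring
  have hspec : ∀ y ∈ spectrum ℝ (M * M), (3 / 4) ^ 2 ≤ y := fun y hy =>
    le_trans (pow_le_pow_left₀ (by norm_num) (by linarith) 2)
      (sq_le_of_mem_spectrum_mul_self_of_involution hs hss hM (by linarith) hy)
  obtain ⟨hW, hWW, hWs⟩ := hM.polar_conj_of_mul_eq_mul (s := s) (s' := s')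
    (by simp only [M, smul_mul_assoc, mul_smul_comm, add_mul, mul_add, hss, hss', add_comm])
    (by simp only [M, smul_mul_assoc, mul_smul_comm, add_mul, mul_add, hss, hss', add_comm])
    (by norm_num) hspec
  set P := cfc (fun y => (√y)⁻¹) (M * M)
  have hP1 : ‖P - 1‖ ≤ ‖s' - s‖ := by
    have hM1 : ‖M‖ ≤ 5 / 4 := (norm_le_norm_add_norm_sub' M s).trans (by linarith)
    have hMM1 := norm_mul_self_sub_mul_self_le M s
    rw [hss, hMs] at hMM1
    calc ‖P - 1‖ ≤ ‖M * M - 1‖ / (2 * (3 / 4) ^ 2) :=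
          IsHermitian.norm_cfc_inv_sqrt_sub_one_le
            (by simpa only [hM.eq] using isHermitian_conjTranspose_mul_self M) (by norm_num) hspec
            (by norm_num)
      _ ≤ ‖s' - s‖ := by
          rw [div_le_iff₀ (by norm_num)]; nlinarith [norm_nonneg (s' - s)]
  have hP : ‖P‖ ≤ 3 / 2 :=
    (norm_le_norm_add_norm_sub' P 1).trans (by linarith [l2_opNorm_one_le (ι := ι)])
  refine ⟨M * P, hW, hWW, hWs, ?_⟩
  calc ‖M * P - s‖ = ‖(M - s) * P + s * (P - 1)‖ := by congr 1; noncomm_ring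
    _ ≤ ‖M - s‖ * ‖P‖ + ‖s‖ * ‖P - 1‖ := norm_add_le_of_le (norm_mul_le _ _) (norm_mul_le _ _)
    _ ≤ ‖s' - s‖ / 2 * (3 / 2) + 1 * ‖s' - s‖ := by rw [hMs]; gcongr
    _ ≤ 2 * ‖s' - s‖ := by linarith [norm_nonneg (s' - s)]

theorem norm_mul_mul_sub_mul_mul_le {O W s R R' : Matrix ι ι ℝ} (hO : O ∈ orthogonalGroup ι ℝ)
    (hs : ‖s‖ ≤ 1) : ‖O * W * R' - O * s * R‖ ≤ ‖W - s‖ * ‖R'‖ + ‖R' - R‖ :=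
  calc ‖O * W * R' - O * s * R‖ = ‖(W - s) * R' + s * (R' - R)‖ := by
        rw [mul_assoc, mul_assoc, ← mul_sub, CStarRing.norm_mem_unitary_mul _ hO]
        congr 1; noncomm_ring
    _ ≤ ‖W - s‖ * ‖R'‖ + ‖s‖ * ‖R' - R‖ := norm_add_le_of_le (norm_mul_le _ _) (norm_mul_le _ _)
    _ ≤ ‖W - s‖ * ‖R'‖ + ‖R' - R‖ := by gcongr; exact mul_le_of_le_one_left (norm_nonneg _) hs

theorem permMatrix_mem_orthogonalGroup (σ : Equiv.Perm ι) :
    σ.permMatrix ℝ ∈ orthogonalGroup ι ℝ := by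
  rw [mem_orthogonalGroup_iff, transpose_permMatrix, ← permMatrix_mul, inv_mul_cancel,
    permMatrix_one]

theorem transpose_permMatrix_mul_diagonal_mul (σ : Equiv.Perm ι) (d : ι → ℝ) :
    (σ.permMatrix ℝ)ᵀ * diagonal d * σ.permMatrix ℝ = diagonal (d ∘ σ.symm) := by
  rw [transpose_permMatrix, Equiv.Perm.permMatrix, Equiv.Perm.permMatrix, Equiv.Perm.inv_def,
    PEquiv.toMatrix_toPEquiv_mul, PEquiv.mul_toMatrix_toPEquiv, submatrix_submatrix]
  exact submatrix_diagonal_equiv d σ.symm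

theorem IsHermitian.abs_det_le_mul_norm_pow {A : Matrix ι ι ℝ} (hA : A.IsHermitian) {x : ℝ}
    (hx : x ∈ spectrum ℝ A) : |A.det| ≤ |x| * ‖A‖ ^ (Fintype.card ι - 1) := by
  obtain ⟨i, rfl⟩ := hA.spectrum_real_eq_range_eigenvalues ▸ hx
  have hle (k : ι) : |hA.eigenvalues k| ≤ ‖A‖ :=
    IsometricContinuousFunctionalCalculus.norm_spectrum_le A
      (hA.eigenvalues_mem_spectrum_real k) hA.isSelfAdjoint
  rw [hA.det_eq_prod_eigenvalues, RCLike.ofReal_real_eq_id, ← Finset.mul_prod_erase _ _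
    (Finset.mem_univ i), abs_mul, Finset.abs_prod]
  refine mul_le_mul_of_nonneg_left ?_ (abs_nonneg _)
  calc ∏ k ∈ Finset.univ.erase i, |hA.eigenvalues k| ≤ ∏ _k ∈ Finset.univ.erase i, ‖A‖ :=
        Finset.prod_le_prod (fun k _ => abs_nonneg _) fun k _ => hle k
    _ = ‖A‖ ^ (Fintype.card ι - 1) := by
        rw [Finset.prod_const, Finset.card_erase_of_mem (Finset.mem_univ i), Finset.card_univ]

end Matrix

section Lorentz

variable {n : ℕ}

theorem exists_transpose_mul_minkowskiEta_mul_eq_cfc_sign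
    {G : Matrix (Fin (n + 1)) (Fin (n + 1)) ℝ} (hG : G.IsHermitian) {j : Fin (n + 1)}
    (hj : hG.eigenvalues j < 0) (hpos : ∀ i, i ≠ j → 0 < hG.eigenvalues i) :
    ∃ O ∈ orthogonalGroup (Fin (n + 1)) ℝ, Oᵀ * minkowskiEta n * O = cfc Real.sign G := by
  set σ := Equiv.swap (0 : Fin (n + 1)) j
  set U := (hG.eigenvectorUnitary : Matrix (Fin (n + 1)) (Fin (n + 1)) ℝ)
  have hη : (σ.permMatrix ℝ)ᵀ * minkowskiEta n * σ.permMatrix ℝ =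
      diagonal (RCLike.ofReal ∘ Real.sign ∘ hG.eigenvalues) := by
    rw [minkowskiEta, transpose_permMatrix_mul_diagonal_mul]
    congr 1; ext i
    simp only [Function.comp_apply, σ, Equiv.symm_swap, Equiv.swap_apply_eq_iff,
      Equiv.swap_apply_left, RCLike.ofReal_real_eq_id, id]
    by_cases hi : i = j
    · rw [if_pos hi, hi, Real.sign_of_neg hj]
    · rw [if_neg hi, Real.sign_of_pos (hpos i hi)]
  refine ⟨σ.permMatrix ℝ * star U, mul_mem (permMatrix_mem_orthogonalGroup σ)
    (Unitary.star_mem hG.eigenvectorUnitary.2), ?_⟩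
  rw [hG.cfc_eq, IsHermitian.cfc, Unitary.conjStarAlgAut_apply, ← hη, transpose_mul,
    star_eq_conjTranspose, conjTranspose_eq_transpose_of_trivial, transpose_transpose]
  noncomm_ring

theorem factor_of_transpose_mul_minkowskiEta_mul {G X : Matrix (Fin (n + 1)) (Fin (n + 1)) ℝ}
    (hG : G.IsHermitian) (hX : X ∈ orthogonalGroup (Fin (n + 1)) ℝ)
    (hXη : Xᵀ * minkowskiEta n * X = cfc Real.sign G) :
    G = (X * cfc (fun x => √|x|) G)ᵀ * minkowskiEta n * (X * cfc (fun x => √|x|) G) ∧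
      ‖X * cfc (fun x => √|x|) G‖ = √‖G‖ := by
  have hR : (cfc (fun x => √|x|) G).IsHermitian := cfc_predicate _ G
  refine ⟨?_, by rw [CStarRing.norm_mem_unitary_mul _ hX, hG.norm_cfc_sqrt_abs]⟩
  rw [hR.transpose_mul_mul_mul, hXη, hG.cfc_sqrt_abs_mul_cfc_sign_mul]

theorem norm_lt_of_mem_lorentzSet {ε : ℝ} {G : Matrix (Fin (n + 1)) (Fin (n + 1)) ℝ}
    (hG : G ∈ lorentzSet n ε) : ‖G‖ < ε⁻¹ :=
  hG.2.2.2

theorem pow_le_abs_of_mem_lorentzSet {ε : ℝ} (hε : 0 < ε)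
    {G : Matrix (Fin (n + 1)) (Fin (n + 1)) ℝ} (hG : G ∈ lorentzSet n ε) {x : ℝ}
    (hx : x ∈ spectrum ℝ G) : ε ^ (n + 1) ≤ |x| := by
  obtain ⟨hH, -, hdet, hnorm⟩ := hG
  have h := hdet.trans_le (hH.abs_det_le_mul_norm_pow hx)
  rw [Fintype.card_fin, Nat.add_sub_cancel] at h
  have h' : ε < |x| * ε⁻¹ ^ n := h.trans_le (by gcongr; exact hnorm.le)
  rw [inv_pow, ← div_eq_mul_inv, lt_div_iff₀ (by positivity)] at h'
  rw [pow_succ']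
  exact h'.le

theorem cfc_sign_mul_self_of_mem_lorentzSet {ε : ℝ} (hε : 0 < ε)
    {G : Matrix (Fin (n + 1)) (Fin (n + 1)) ℝ} (hG : G ∈ lorentzSet n ε) :
    cfc Real.sign G * cfc Real.sign G = 1 :=
  hG.1.cfc_sign_mul_self fun _ hx =>
    abs_pos.1 ((pow_pos hε _).trans_le (pow_le_abs_of_mem_lorentzSet hε hG hx))

theorem exists_transpose_mul_minkowskiEta_mul_of_mem_lorentzSet {ε : ℝ}
    {G : Matrix (Fin (n + 1)) (Fin (n + 1)) ℝ} (hG : G ∈ lorentzSet n ε) :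
    ∃ O ∈ orthogonalGroup (Fin (n + 1)) ℝ, Oᵀ * minkowskiEta n * O = cfc Real.sign G :=
  let ⟨hH, ⟨_, hj, hpos⟩, _⟩ := hG
  exists_transpose_mul_minkowskiEta_mul_eq_cfc_sign hH hj hpos

theorem exists_lipschitz_on_lorentzSet {ε : ℝ} (hε : 0 < ε) :
    ∃ L, 0 ≤ L ∧ ∀ G ∈ lorentzSet n ε, ∀ G' ∈ lorentzSet n ε,
      ‖cfc (fun x => √|x|) G' - cfc (fun x => √|x|) G‖ ≤ L * ‖G' - G‖ ∧
      ‖cfc Real.sign G' - cfc Real.sign G‖ ≤ L * ‖G' - G‖ := by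
  set a := ε ^ (n + 1)
  have ha : 0 < a := by positivity
  set D := ε⁻¹ / a
  refine ⟨D / (2 * √a) + 1 / a + ε⁻¹ * D / a ^ 2, by positivity, fun G hG G' hG' => ?_⟩
  have hGa := fun x (hx : x ∈ spectrum ℝ G) => pow_le_abs_of_mem_lorentzSet hε hG hx
  have hG'a := fun x (hx : x ∈ spectrum ℝ G') => pow_le_abs_of_mem_lorentzSet hε hG' hx
  have hK := (norm_lt_of_mem_lorentzSet hG).le
  have hK' := (norm_lt_of_mem_lorentzSet hG').le
  have habs : ‖cfc (fun x : ℝ => |x|) G' - cfc (fun x : ℝ => |x|) G‖ ≤ D * ‖G' - G‖ :=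
    (norm_cfc_abs_sub_le hG.1 hG'.1 ha hGa hG'a).trans (by
      gcongr; rw [div_le_div_iff₀ (by positivity) ha]; nlinarith)
  constructor
  · calc _ ≤ _ := norm_cfc_sqrt_abs_sub_le hG.1 hG'.1 ha hGa hG'a
      _ ≤ D * ‖G' - G‖ / (2 * √a) := by gcongr
      _ = D / (2 * √a) * ‖G' - G‖ := by ring
      _ ≤ _ := by gcongr; linarith [show 0 ≤ 1 / a + ε⁻¹ * D / a ^ 2 by positivity]
  · calc _ ≤ _ := norm_cfc_sign_sub_le hG.1 hG'.1 ha hGa hG'a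
      _ ≤ ‖G' - G‖ / a + ε⁻¹ * (D * ‖G' - G‖) / a ^ 2 := by gcongr
      _ = (1 / a + ε⁻¹ * D / a ^ 2) * ‖G' - G‖ := by ring
      _ ≤ _ := by gcongr; linarith [show 0 ≤ D / (2 * √a) by positivity]

theorem exists_factor_norm_sub_le {ε : ℝ} (hε : 0 < ε)
    {G G' O : Matrix (Fin (n + 1)) (Fin (n + 1)) ℝ} (hG : G ∈ lorentzSet n ε)
    (hG' : G' ∈ lorentzSet n ε) (hO : O ∈ orthogonalGroup (Fin (n + 1)) ℝ)
    (hOη : Oᵀ * minkowskiEta n * O = cfc Real.sign G) {L : ℝ} (hL0 : 0 ≤ L)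
    (hL : ‖cfc (fun x => √|x|) G' - cfc (fun x => √|x|) G‖ ≤ L * ‖G' - G‖ ∧
      ‖cfc Real.sign G' - cfc Real.sign G‖ ≤ L * ‖G' - G‖) :
    ∃ F, G' = Fᵀ * minkowskiEta n * F ∧ ‖F‖ = √‖G'‖ ∧
      ‖F - O * cfc Real.sign G * cfc (fun x => √|x|) G‖ ≤ (4 * √ε⁻¹ + 1) * L * ‖G' - G‖ := by
  set s := cfc Real.sign G
  have hsh : s.IsHermitian := cfc_predicate _ G
  have hs := cfc_sign_mul_self_of_mem_lorentzSet hε hG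
  have hsqrt {A} (hA : A ∈ lorentzSet n ε) : √‖A‖ ≤ √ε⁻¹ :=
    Real.sqrt_le_sqrt (norm_lt_of_mem_lorentzSet hA).le
  by_cases hnear : ‖cfc Real.sign G' - s‖ ≤ 1 / 2
  · obtain ⟨W, hW, hWW, hWs, hWs'⟩ := exists_isHermitian_conj_of_involution hsh
      (cfc_predicate _ G') hs (cfc_sign_mul_self_of_mem_lorentzSet hε hG') hnear
    obtain ⟨hF, hFnorm⟩ := factor_of_transpose_mul_minkowskiEta_mul hG'.1
      (mul_mem hO (hW.mem_orthogonalGroup_of_mul_self_eq_one hWW))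
      (by rw [hW.transpose_mul_mul_mul, hOη]; exact hWs)
    refine ⟨_, hF, hFnorm, ?_⟩
    calc _ ≤ ‖W - s‖ * ‖cfc (fun x => √|x|) G'‖ + _ :=
          norm_mul_mul_sub_mul_mul_le hO (hsh.norm_le_one_of_mul_self_eq_one hs)
      _ ≤ 2 * (L * ‖G' - G‖) * √ε⁻¹ + L * ‖G' - G‖ := by
          gcongr
          · exact hWs'.trans (by gcongr; exact hL.2)
          · rw [hG'.1.norm_cfc_sqrt_abs]; exact hsqrt hG'
          · exact hL.1
      _ ≤ (4 * √ε⁻¹ + 1) * L * ‖G' - G‖ := by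
          nlinarith [Real.sqrt_nonneg ε⁻¹, mul_nonneg hL0 (norm_nonneg (G' - G))]
  · obtain ⟨O', hO', hO'η⟩ := exists_transpose_mul_minkowskiEta_mul_of_mem_lorentzSet hG'
    obtain ⟨hF, hFnorm⟩ := factor_of_transpose_mul_minkowskiEta_mul hG'.1 hO' hO'η
    have hB := (factor_of_transpose_mul_minkowskiEta_mul hG.1
      (mul_mem hO (hsh.mem_orthogonalGroup_of_mul_self_eq_one hs))
      (by rw [hsh.transpose_mul_mul_mul, hOη, hs, one_mul])).2
    refine ⟨_, hF, hFnorm, ?_⟩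
    calc _ ≤ √ε⁻¹ + √ε⁻¹ := (norm_sub_le _ _).trans (by
          rw [hFnorm, hB]; exact add_le_add (hsqrt hG') (hsqrt hG))
      _ ≤ (4 * √ε⁻¹ + 1) * L * ‖G' - G‖ := by
          have : 1 ≤ 2 * (L * ‖G' - G‖) := by linarith [hL.2]
          nlinarith [Real.sqrt_nonneg ε⁻¹]

end Lorentz

theorem lorentz_decomposition_lipschitz_general (n : ℕ) (ε : ℝ) (hε : 0 < ε) :
    ∃ C : ℝ, ∀ G ∈ lorentzSet n ε,
      ∃ F : Matrix (Fin (n + 1)) (Fin (n + 1)) ℝ → Matrix (Fin (n + 1)) (Fin (n + 1)) ℝ,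
        ∀ G' ∈ lorentzSet n ε,
          G' = (F G')ᵀ * minkowskiEta n * F G' ∧
          matOpNorm (F G') = Real.sqrt (matOpNorm G') ∧
          matOpNorm (F G' - F G) ≤ C * matOpNorm (G' - G) := by
  obtain ⟨L, hL0, hL⟩ := exists_lipschitz_on_lorentzSet (n := n) hε
  refine ⟨(4 * √ε⁻¹ + 1) * L, fun G hG => ?_⟩
  obtain ⟨O, hO, hOη⟩ := exists_transpose_mul_minkowskiEta_mul_of_mem_lorentzSet hG
  choose! F hF using fun G' (hG' : G' ∈ lorentzSet n ε) =>
    exists_factor_norm_sub_le hε hG hG' hO hOη hL0 (hL G hG G' hG')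
  -- The bound at `G' = G` has right-hand side `0`, which pins down `F G`.
  have hFG : F G = O * cfc Real.sign G * cfc (fun x => √|x|) G := by
    simpa [sub_eq_zero] using (hF G hG).2.2
  -- `matOpNorm A` is by definition the L2 operator norm `‖A‖`.
  exact ⟨F, fun G' hG' => hFG ▸ hF G' hG'⟩

/-- **Lemma 2.1.** There is a constant `C(ε,n)`, independent of `G`, such
that for every `G ∈ 𝕃_ε(n+1)` there is a map `F : 𝕃_ε(n+1) → ℝ^{(n+1)×(n+1)}` with
`G̃ = F(G̃)ᵀ η F(G̃)`, `|F(G̃)| = |G̃|^{1/2}` and `|F(G̃) − F(G)| ≤ C(ε,n) |G̃ − G|`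
for all `G̃ ∈ 𝕃_ε(n+1)`. -/
theorem lorentz_decomposition_lipschitz (n : ℕ) (ε : ℝ) (hε : 0 < ε) (hε1 : ε ≤ 1) :
    ∃ C : ℝ, ∀ G ∈ lorentzSet n ε,
      ∃ F : Matrix (Fin (n + 1)) (Fin (n + 1)) ℝ → Matrix (Fin (n + 1)) (Fin (n + 1)) ℝ,
        ∀ G' ∈ lorentzSet n ε,
          G' = (F G')ᵀ * minkowskiEta n * F G' ∧
          matOpNorm (F G') = Real.sqrt (matOpNorm G') ∧
          matOpNorm (F G' - F G) ≤ C * matOpNorm (G' - G) :=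
  lorentz_decomposition_lipschitz_general n ε hε
end

section
/- Let Ω ⊂ ℝ^{n+1} be open, p > n+1, and let f ∈ W^{2,p}_loc(Ω; ℝ^{n+1}) be an immersion with (df)ᵀ η (df) = (g_{αβ}), where g_{αβ} ∈ W^{1,p}_loc. Then the columns F_σ = ∂f/∂x^σ satisfy ∂F_σ/∂x^α = Γ^β_{ασ} F_β a.e. in Ω, where Γ^β_{ασ} = ½ g^{βν}(∂_α g_{νσ} + ∂_σ g_{αν} − ∂_ν g_{ασ}) are the Christoffel symbols of (g_{αβ}). -/
/-!
Write `F_σ = ∂_σ f` and `H_{ασ} = ∂_α F_σ`. Differentiating `g_{νσ} = ⟨F_ν, F_σ⟩_η` gives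
`∂_α g_{νσ} = ⟨H_{αν}, F_σ⟩_η + ⟨F_ν, H_{ασ}⟩_η`, and since `H` is symmetric (Schwarz) the Koszul
combination `∂_α g_{νσ} + ∂_σ g_{αν} − ∂_ν g_{ασ}` collapses to `2 ⟨F_ν, H_{ασ}⟩_η`. As `df` is
invertible the `F_β` form a frame, and the coordinates of `H_{ασ}` in it are obtained by applying
`g⁻¹` to the vector `(⟨F_ν, H_{ασ}⟩_η)_ν`, which is exactly `Γ^β_{ασ}`.
-/

open Matrix

/-- The Jacobian matrix `df` of a map `f : ℝ^{n+1} → ℝ^{n+1}`, with `(df)_{αβ} = ∂f_α/∂x^β`. -/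
noncomputable def jacobian (n : ℕ) (f : (Fin (n + 1) → ℝ) → Fin (n + 1) → ℝ)
    (x : Fin (n + 1) → ℝ) : Matrix (Fin (n + 1)) (Fin (n + 1)) ℝ :=
  Matrix.of fun α β => fderiv ℝ f x (Pi.single β 1) α

open Filter Topology

section Calculus

variable {𝕜 : Type*} [NontriviallyNormedField 𝕜]
  {E : Type*} [NormedAddCommGroup E] [NormedSpace 𝕜 E]
  {F : Type*} [NormedAddCommGroup F] [NormedSpace 𝕜 F] {x : E}

theorem differentiableAt_of_differentiableAt_apply_single [CompleteSpace 𝕜]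
    {ι : Type*} [Fintype ι] [DecidableEq ι] {L : E → (ι → 𝕜) →L[𝕜] F}
    (hL : ∀ i, DifferentiableAt 𝕜 (fun y => L y (Pi.single i 1)) x) :
    DifferentiableAt 𝕜 L x := by
  have : DifferentiableAt 𝕜 (fun y => ContinuousLinearEquiv.piRing (𝕜 := 𝕜) (E := F) ι (L y)) x :=
    differentiableAt_pi.mpr hL
  simpa [Function.comp_def] using
    (ContinuousLinearEquiv.piRing ι).symm.differentiableAt.comp x this

theorem fderiv_fderiv_apply_comm [IsRCLikeNormedField 𝕜] {f : E → F}
    (hf : ∀ᶠ y in 𝓝 x, DifferentiableAt 𝕜 f y) (hf' : DifferentiableAt 𝕜 (fderiv 𝕜 f) x)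
    (v w : E) :
    fderiv 𝕜 (fun y => fderiv 𝕜 f y v) x w = fderiv 𝕜 (fun y => fderiv 𝕜 f y w) x v := by
  have happly : ∀ u, fderiv 𝕜 (fun y => fderiv 𝕜 f y u) x = (fderiv 𝕜 (fderiv 𝕜 f) x).flip u :=
    fun u => by simp [fderiv_clm_apply hf' (differentiableAt_const u)]
  simp only [happly, ContinuousLinearMap.flip_apply]
  exact second_derivative_symmetric_of_eventually
    (hf.mono fun y hy => hy.hasFDerivAt) hf'.hasFDerivAt w v

theorem fderiv_dotProduct_mulVec_apply [CompleteSpace 𝕜] {ι : Type*} [Fintype ι] [DecidableEq ι]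
    (A : Matrix ι ι 𝕜) {u v : E → ι → 𝕜} (hu : DifferentiableAt 𝕜 u x)
    (hv : DifferentiableAt 𝕜 v x) (w : E) :
    fderiv 𝕜 (fun y => u y ⬝ᵥ (A *ᵥ v y)) x w
      = fderiv 𝕜 u x w ⬝ᵥ (A *ᵥ v x) + u x ⬝ᵥ (A *ᵥ fderiv 𝕜 v x w) := by
  let B : (ι → 𝕜) →L[𝕜] (ι → 𝕜) →L[𝕜] 𝕜 := LinearMap.toContinuousLinearMap
    (LinearMap.toContinuousLinearMap.toLinearMap ∘ₗ Matrix.toLinearMap₂' 𝕜 A)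
  have hB : ∀ a b, B a b = a ⬝ᵥ (A *ᵥ b) := fun a b => Matrix.toLinearMap₂'_apply' A a b
  simp only [← hB]
  rw [B.fderiv_of_bilinear hu hv]
  simp [add_comm]

end Calculus

theorem koszul_of_symm {R M ι : Type*} [CommRing R] {B : M → M → R}
    (hB : ∀ u v, B u v = B v u) {F : ι → M} {H : ι → ι → M} (hH : ∀ μ τ, H μ τ = H τ μ)
    (α ν σ : ι) :
    (B (H α ν) (F σ) + B (F ν) (H α σ)) + (B (H σ α) (F ν) + B (F α) (H σ ν))
      - (B (H ν α) (F σ) + B (F α) (H ν σ)) = 2 * B (F ν) (H α σ) := by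
  rw [hH ν α, hH ν σ, hH σ α, hB (H α σ)]
  ring

namespace Matrix

variable {R ι : Type*} [CommRing R] [Fintype ι]

theorem IsSymm.dotProduct_mulVec_comm {A : Matrix ι ι R} (hA : A.IsSymm) (u v : ι → R) :
    u ⬝ᵥ (A *ᵥ v) = v ⬝ᵥ (A *ᵥ u) := by
  rw [dotProduct_mulVec, ← mulVec_transpose, hA.eq, dotProduct_comm]

/-- The coordinates of `h` in the frame of columns of `J` are read off from the Gram matrix
`Jᵀ A J` of the columns with respect to the form `A`. -/
theorem sum_inv_transpose_mul_mul_mulVec_smul_eq [DecidableEq ι] {J A : Matrix ι ι R}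
    (hJ : IsUnit J) (hA : IsUnit A) (h : ι → R) :
    ∑ β, ((Jᵀ * A * J)⁻¹ *ᵥ (Jᵀ *ᵥ (A *ᵥ h))) β • Jᵀ β = h := by
  have hJ' : IsUnit J.det := (isUnit_iff_isUnit_det J).mp hJ
  have hG : IsUnit (Jᵀ * A * J).det := by
    rw [det_mul, det_mul, det_transpose]
    exact (hJ'.mul ((isUnit_iff_isUnit_det A).mp hA)).mul hJ'
  have hcoord : (Jᵀ * A * J)⁻¹ *ᵥ (Jᵀ *ᵥ (A *ᵥ h)) = J⁻¹ *ᵥ h := by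
    have hJA : Jᵀ * A = Jᵀ * A * J * J⁻¹ := (mul_nonsing_inv_cancel_right J _ hJ').symm
    rw [mulVec_mulVec, mulVec_mulVec, Matrix.mul_assoc]
    nth_rw 2 [hJA]
    rw [nonsing_inv_mul_cancel_left _ _ hG]
  rw [hcoord]
  conv_rhs => rw [← one_mulVec h, ← mul_nonsing_inv J hJ', ← mulVec_mulVec, mulVec_eq_sum]
  simp

end Matrix

theorem minkowskiEta_isSymm (n : ℕ) : (minkowskiEta n).IsSymm :=
  isSymm_diagonal _

theorem isUnit_minkowskiEta (n : ℕ) : IsUnit (minkowskiEta n) :=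
  isUnit_diagonal.mpr (Pi.isUnit_iff.mpr fun i => by split_ifs <;> simp)

theorem jacobian_transpose_apply (n : ℕ) (f : (Fin (n + 1) → ℝ) → Fin (n + 1) → ℝ)
    (x : Fin (n + 1) → ℝ) (σ : Fin (n + 1)) :
    (jacobian n f x)ᵀ σ = fderiv ℝ f x (Pi.single σ 1) :=
  rfl

section Immersion

variable {n : ℕ} {Ω : Set (Fin (n + 1) → ℝ)} {f : (Fin (n + 1) → ℝ) → Fin (n + 1) → ℝ}
  {g : (Fin (n + 1) → ℝ) → Matrix (Fin (n + 1)) (Fin (n + 1)) ℝ}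
  {A : Matrix (Fin (n + 1)) (Fin (n + 1)) ℝ} {x : Fin (n + 1) → ℝ}

theorem fderiv_metric_apply (hΩ : IsOpen Ω)
    (hf2 : ∀ σ : Fin (n + 1), ∀ x ∈ Ω,
      DifferentiableAt ℝ (fun y => fderiv ℝ f y (Pi.single σ 1)) x)
    (hiso : ∀ x ∈ Ω, (jacobian n f x)ᵀ * A * jacobian n f x = g x)
    (hx : x ∈ Ω) (μ ν τ : Fin (n + 1)) :
    fderiv ℝ (fun y => g y ν τ) x (Pi.single μ 1)
      = fderiv ℝ (fun y => fderiv ℝ f y (Pi.single ν 1)) x (Pi.single μ 1)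
          ⬝ᵥ (A *ᵥ fderiv ℝ f x (Pi.single τ 1))
        + fderiv ℝ f x (Pi.single ν 1)
          ⬝ᵥ (A *ᵥ fderiv ℝ (fun y => fderiv ℝ f y (Pi.single τ 1)) x (Pi.single μ 1)) := by
  have hg : (fun y => g y ν τ) =ᶠ[𝓝 x]
      fun y => fderiv ℝ f y (Pi.single ν 1) ⬝ᵥ (A *ᵥ fderiv ℝ f y (Pi.single τ 1)) :=
    eventually_of_mem (hΩ.mem_nhds hx) fun y hy =>
      (by rw [← hiso y hy, mul_mul_apply]; rfl : g y ν τ = _)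
  rw [hg.fderiv_eq, fderiv_dotProduct_mulVec_apply A (hf2 ν x hx) (hf2 τ x hx)]

theorem koszul_metric_eq (hA : A.IsSymm) (hΩ : IsOpen Ω)
    (hfd : ∀ x ∈ Ω, DifferentiableAt ℝ f x)
    (hf2 : ∀ σ : Fin (n + 1), ∀ x ∈ Ω,
      DifferentiableAt ℝ (fun y => fderiv ℝ f y (Pi.single σ 1)) x)
    (hiso : ∀ x ∈ Ω, (jacobian n f x)ᵀ * A * jacobian n f x = g x)
    (hx : x ∈ Ω) (α ν σ : Fin (n + 1)) :
    fderiv ℝ (fun y => g y ν σ) x (Pi.single α 1)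
      + fderiv ℝ (fun y => g y α ν) x (Pi.single σ 1)
      - fderiv ℝ (fun y => g y α σ) x (Pi.single ν 1)
      = 2 * ((jacobian n f x)ᵀ *ᵥ (A *ᵥ
          fderiv ℝ (fun y => fderiv ℝ f y (Pi.single σ 1)) x (Pi.single α 1))) ν := by
  have hH : ∀ μ τ : Fin (n + 1),
      fderiv ℝ (fun y => fderiv ℝ f y (Pi.single τ 1)) x (Pi.single μ 1)
        = fderiv ℝ (fun y => fderiv ℝ f y (Pi.single μ 1)) x (Pi.single τ 1) := fun μ τ =>
    fderiv_fderiv_apply_comm (eventually_of_mem (hΩ.mem_nhds hx) hfd)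
      (differentiableAt_of_differentiableAt_apply_single fun τ => hf2 τ x hx) _ _
  simp only [fderiv_metric_apply hΩ hf2 hiso hx]
  exact koszul_of_symm hA.dotProduct_mulVec_comm
    (F := fun β => fderiv ℝ f x (Pi.single β 1))
    (H := fun μ τ => fderiv ℝ (fun y => fderiv ℝ f y (Pi.single τ 1)) x (Pi.single μ 1))
    hH α ν σ

end Immersion

theorem isometric_immersion_preserves_connection_general (n : ℕ)
    (Ω : Set (Fin (n + 1) → ℝ)) (hΩ : IsOpen Ω)
    (f : (Fin (n + 1) → ℝ) → Fin (n + 1) → ℝ)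
    (g : (Fin (n + 1) → ℝ) → Matrix (Fin (n + 1)) (Fin (n + 1)) ℝ)
    (hfd : ∀ x ∈ Ω, DifferentiableAt ℝ f x)
    (hf2 : ∀ σ : Fin (n + 1), ∀ x ∈ Ω,
      DifferentiableAt ℝ (fun y => fderiv ℝ f y (Pi.single σ 1)) x)
    (himm : ∀ x ∈ Ω, IsUnit (jacobian n f x))
    (hiso : ∀ x ∈ Ω, (jacobian n f x)ᵀ * minkowskiEta n * jacobian n f x = g x) :
    ∀ x ∈ Ω, ∀ α σ : Fin (n + 1),
      fderiv ℝ (fun y => fderiv ℝ f y (Pi.single σ 1)) x (Pi.single α 1)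
        = ∑ β : Fin (n + 1),
            ((1 / 2) * ∑ ν : Fin (n + 1), (g x)⁻¹ β ν *
              (fderiv ℝ (fun y => g y ν σ) x (Pi.single α 1)
               + fderiv ℝ (fun y => g y α ν) x (Pi.single σ 1)
               - fderiv ℝ (fun y => g y α σ) x (Pi.single ν 1)))
            • fderiv ℝ f x (Pi.single β 1) := by
  intro x hx α σ
  conv_lhs => rw [← sum_inv_transpose_mul_mul_mulVec_smul_eq (himm x hx) (isUnit_minkowskiEta n)
    (fderiv ℝ (fun y => fderiv ℝ f y (Pi.single σ 1)) x (Pi.single α 1))]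
  refine Finset.sum_congr rfl fun β _ => ?_
  rw [hiso x hx, jacobian_transpose_apply]
  simp only [koszul_metric_eq (minkowskiEta_isSymm n) hΩ hfd hf2 hiso hx,
    mul_left_comm _ (2 : ℝ), ← Finset.mul_sum]
  rw [← mul_assoc, mul_one_div_cancel two_ne_zero, one_mul]
  rfl

/-- If `f` is an immersion with `(df)ᵀ η (df) = g` on an open set `Ω`,
then the columns `F_σ = ∂f/∂x^σ` satisfy `∂F_σ/∂x^α = Γ^β_{ασ} F_β` on `Ω`, where
`Γ^β_{ασ} = ½ g^{βν}(∂_α g_{νσ} + ∂_σ g_{αν} − ∂_ν g_{ασ})` are the Christoffel symbols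
of `g`: an isometric immersion into Minkowski space preserves the Levi-Civita connection. -/
theorem isometric_immersion_preserves_connection (n : ℕ)
    (Ω : Set (Fin (n + 1) → ℝ)) (hΩ : IsOpen Ω)
    (f : (Fin (n + 1) → ℝ) → Fin (n + 1) → ℝ)
    (g : (Fin (n + 1) → ℝ) → Matrix (Fin (n + 1)) (Fin (n + 1)) ℝ)
    (hfd : ∀ x ∈ Ω, DifferentiableAt ℝ f x)
    (hf2 : ∀ σ : Fin (n + 1), ∀ x ∈ Ω,
      DifferentiableAt ℝ (fun y => fderiv ℝ f y (Pi.single σ 1)) x)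
    (himm : ∀ x ∈ Ω, IsUnit (jacobian n f x))
    (hginv : ∀ x ∈ Ω, IsUnit (g x))
    (hgd : ∀ x ∈ Ω, ∀ α β, DifferentiableAt ℝ (fun y => g y α β) x)
    (hiso : ∀ x ∈ Ω, (jacobian n f x)ᵀ * minkowskiEta n * jacobian n f x = g x) :
    ∀ x ∈ Ω, ∀ α σ : Fin (n + 1),
      fderiv ℝ (fun y => fderiv ℝ f y (Pi.single σ 1)) x (Pi.single α 1)
        = ∑ β : Fin (n + 1),
            ((1 / 2) * ∑ ν : Fin (n + 1), (g x)⁻¹ β ν *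
              (fderiv ℝ (fun y => g y ν σ) x (Pi.single α 1)
               + fderiv ℝ (fun y => g y α ν) x (Pi.single σ 1)
               - fderiv ℝ (fun y => g y α σ) x (Pi.single ν 1)))
            • fderiv ℝ f x (Pi.single β 1) :=
  isometric_immersion_preserves_connection_general n Ω hΩ f g hfd hf2 himm hiso
end

section
/- Let Ω ⊂ ℝ^m be open and connected, p > m, and let Y ∈ W^{1,p}_loc(Ω; ℝ^{(n+1)×(n+1)}) and G ∈ W^{1,p}_loc(Ω; Sym(n+1)) satisfy ∂_i Y = C_iᵀ Y + Y C_i and ∂_i G = C_iᵀ G + G C_i a.e. in Ω for matrix fields C_i ∈ L^p_loc. If Y(x⋆) = G(x⋆) at some x⋆ ∈ Ω, then Y = G on all of Ω. -/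
/-!
The difference `Z = Y - G` solves the same linear system, so `‖∂_v Z‖ ≤ K ‖Z‖ ‖v‖` with
`K = 2 (n + 1) ∑ᵢ ‖Cᵢ‖ ∈ L^p_loc`. Let `z` be a zero of `Z`. By Tonelli and the change of
variables `y ↦ z + t (y - z)`,
`∫_{B_r(z)} ∫₀¹ K(z + t (y - z)) dt dy = ∫₀¹ t^{-m} ∫_{B_{tr}(z)} K dt`,
and Hölder bounds the inner integral by a multiple of `t^{m (1 - 1/p)}`; since `p > m` the
result is finite. Hence for almost every `y ∈ B_r(z)` the coefficient is integrable along the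
segment `[z, y]`, and Grönwall's inequality along that segment gives `Z y = 0`. By continuity
`Z` vanishes on `B_r(z)`, so the zero set of `Z` is open; it is also relatively closed in the
connected set `Ω`.
-/

open Matrix MeasureTheory Set Filter Topology Metric Module AffineMap
open scoped ENNReal

section Gronwall

variable {E : Type*} [NormedAddCommGroup E] [NormedSpace ℝ E] {u u' : ℝ → E} {a b : ℝ}

theorem norm_sub_le_integral_of_norm_deriv_le {φ : ℝ → ℝ} (hab : a ≤ b)
    (hu : ∀ t ∈ Icc a b, HasDerivAt u (u' t) t) (hφ : IntegrableOn φ (Icc a b))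
    (hbound : ∀ t ∈ Ioo a b, ‖u' t‖ ≤ φ t) :
    ‖u b - u a‖ ≤ ∫ t in a..b, φ t := by
  obtain ⟨ℓ, hℓ, hℓu⟩ := exists_dual_vector'' ℝ (u b - u a)
  have hcont : ContinuousOn (fun t => ℓ (u t)) (Icc a b) := fun t ht =>
    (ℓ.continuous.continuousAt.comp (hu t ht).continuousAt).continuousWithinAt
  have hderiv : ∀ t ∈ Ioo a b, HasDerivWithinAt (fun t => ℓ (u t)) (ℓ (u' t)) (Ioi t) t :=
    fun t ht => (ℓ.hasFDerivAt.comp_hasDerivAt t (hu t (Ioo_subset_Icc_self ht))).hasDerivWithinAt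
  have hle : ∀ t ∈ Ioo a b, ℓ (u' t) ≤ φ t := fun t ht =>
    calc ℓ (u' t) ≤ ‖ℓ‖ * ‖u' t‖ := (le_abs_self _).trans (ℓ.le_opNorm _)
      _ ≤ 1 * φ t := mul_le_mul hℓ (hbound t ht) (norm_nonneg _) zero_le_one
      _ = φ t := one_mul _
  have := intervalIntegral.sub_le_integral_of_hasDeriv_right_of_le hab hcont hderiv hφ hle
  rwa [← map_sub, hℓu] at this

variable {g : ℝ → ℝ}

theorem eqOn_zero_of_norm_deriv_le_of_integral_lt_one (hab : a ≤ b)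
    (hu : ∀ t ∈ Icc a b, HasDerivAt u (u' t) t) (hbound : ∀ t ∈ Icc a b, ‖u' t‖ ≤ g t * ‖u t‖)
    (hg : IntegrableOn g (Icc a b)) (hsmall : ∫ t in a..b, |g t| < 1) (ha : u a = 0) :
    EqOn u 0 (Icc a b) := by
  have hcont : ContinuousOn u (Icc a b) := fun t ht => (hu t ht).continuousAt.continuousWithinAt
  obtain ⟨c, hc, hmax⟩ := isCompact_Icc.exists_isMaxOn (nonempty_Icc.2 hab) hcont.norm
  have habs : IntegrableOn (fun t => |g t|) (Icc a b) := hg.abs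
  have hMV : ‖u c‖ ≤ ‖u c‖ * ∫ t in a..b, |g t| := by
    calc ‖u c‖ = ‖u c - u a‖ := by rw [ha, sub_zero]
      _ ≤ ∫ t in a..c, |g t| * ‖u c‖ :=
          norm_sub_le_integral_of_norm_deriv_le hc.1
            (fun t ht => hu t ⟨ht.1, ht.2.trans hc.2⟩)
            ((habs.mono_set (Icc_subset_Icc_right hc.2)).mul_const _)
            (fun t ht => (hbound t ⟨ht.1.le, ht.2.le.trans hc.2⟩).trans
              (mul_le_mul (le_abs_self _) (hmax ⟨ht.1.le, ht.2.le.trans hc.2⟩)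
                (norm_nonneg _) (abs_nonneg _)))
      _ = ‖u c‖ * ∫ t in a..c, |g t| := by rw [intervalIntegral.integral_mul_const, mul_comm]
      _ ≤ ‖u c‖ * ∫ t in a..b, |g t| := by
          gcongr
          exact intervalIntegral.integral_mono_interval le_rfl hc.1 hc.2
            (Eventually.of_forall fun t => abs_nonneg _)
            ((intervalIntegrable_iff_integrableOn_Icc_of_le hab).2 habs)
  have hc0 : ‖u c‖ = 0 := by nlinarith [norm_nonneg (u c)]
  intro t ht
  simpa [hc0] using (hmax ht : ‖u t‖ ≤ ‖u c‖)

theorem eqOn_zero_of_norm_deriv_le_mul_norm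
    (hu : ∀ t ∈ Icc a b, HasDerivAt u (u' t) t) (hbound : ∀ t ∈ Icc a b, ‖u' t‖ ≤ g t * ‖u t‖)
    (hg : IntegrableOn g (Icc a b)) (ha : u a = 0) :
    EqOn u 0 (Icc a b) := by
  have hcont : ContinuousOn u (Icc a b) := fun t ht => (hu t ht).continuousAt.continuousWithinAt
  have hclosed : IsClosed (u ⁻¹' {0} ∩ Icc a b) := by
    rw [inter_comm]; exact hcont.preimage_isClosed_of_isClosed isClosed_Icc isClosed_singleton
  refine fun t ht => hclosed.Icc_subset_of_forall_mem_nhdsWithin ha ?_ ht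
  rintro x ⟨hx, hxa, hxb⟩
  have hprim : ContinuousWithinAt (fun c => ∫ t in x..c, |g t|) (Icc x b) x := by
    have := intervalIntegral.continuousOn_primitive_interval (a := x) (b := b)
      (f := fun t => |g t|) (μ := volume)
      (by rw [uIcc_of_le hxb.le]; exact (hg.mono_set (Icc_subset_Icc_left hxa)).abs)
    rw [uIcc_of_le hxb.le] at this
    exact this x (left_mem_Icc.2 hxb.le)
  have hev : ∀ᶠ c in 𝓝[>] x, (∫ t in x..c, |g t|) < 1 ∧ c ∈ Ioc x b := by
    rw [← nhdsWithin_Ioc_eq_nhdsGT hxb]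
    refine ((hprim.mono Ioc_subset_Icc_self).eventually_lt_const ?_).and self_mem_nhdsWithin
    simp
  obtain ⟨c, hc1, hxc, hcb⟩ := hev.exists
  have hzero := eqOn_zero_of_norm_deriv_le_of_integral_lt_one hxc.le
    (fun t ht => hu t ⟨hxa.trans ht.1, ht.2.trans hcb⟩)
    (fun t ht => hbound t ⟨hxa.trans ht.1, ht.2.trans hcb⟩)
    (hg.mono_set (Icc_subset_Icc hxa hcb)) hc1 hx
  exact mem_of_superset (Icc_mem_nhdsGT hxc) fun t ht => hzero ht

end Gronwall

namespace ENNReal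

theorem toReal_inv_le_one_of_one_le {p : ℝ≥0∞} (hp : 1 ≤ p) : p.toReal⁻¹ ≤ 1 := by
  rcases eq_or_ne p ∞ with rfl | hp_top
  · simp
  exact inv_le_one_of_one_le₀ (by simpa using ENNReal.toReal_mono hp_top hp)

theorem natCast_mul_toReal_inv_lt_one {m : ℕ} {p : ℝ≥0∞} (hp : (m : ℝ≥0∞) < p) :
    (m : ℝ) * p.toReal⁻¹ < 1 := by
  rcases eq_or_ne p ∞ with rfl | hp_top
  · simp
  have hmp : (m : ℝ) < p.toReal := by
    simpa using (ENNReal.toReal_lt_toReal (ENNReal.natCast_ne_top m) hp_top).2 hp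
  rw [← div_eq_mul_inv, div_lt_one ((Nat.cast_nonneg m).trans_lt hmp)]
  exact hmp

theorem ofReal_pow_inv_mul_rpow {t : ℝ} (ht : 0 < t) (m : ℕ) (β : ℝ) :
    ENNReal.ofReal (t ^ m)⁻¹ * ENNReal.ofReal (t ^ m) ^ (1 - β)
      = ENNReal.ofReal (t ^ (-((m : ℝ) * β))) := by
  have htm : 0 < t ^ m := pow_pos ht m
  rw [ENNReal.ofReal_rpow_of_pos htm, ← ENNReal.ofReal_mul (inv_nonneg.2 htm.le),
    ← Real.rpow_neg_one, ← Real.rpow_add htm, ← Real.rpow_natCast_mul ht.le]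
  ring_nf

end ENNReal

section Segments

variable {X : Type*} [NormedAddCommGroup X] [NormedSpace ℝ X] [MeasurableSpace X] [BorelSpace X]

theorem measurable_uncurry_comp_lineMap {F : X → ℝ≥0∞} (hF : Measurable F) (z : X) :
    Measurable (Function.uncurry fun (y : X) (t : ℝ) => F (lineMap z y t)) := by
  refine hF.comp (Continuous.measurable ?_)
  simp only [lineMap_apply_module']
  fun_prop

variable [FiniteDimensional ℝ X] (μ : Measure X) [μ.IsAddHaarMeasure]

theorem lintegral_comp_homothety {F : X → ℝ≥0∞} (hF : Measurable F) (z : X) {t : ℝ}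
    (ht : t ≠ 0) :
    ∫⁻ y, F (homothety z t y) ∂μ = ENNReal.ofReal |(t ^ finrank ℝ X)⁻¹| * ∫⁻ w, F w ∂μ := by
  simp only [homothety_apply, vsub_eq_sub, vadd_eq_add]
  calc ∫⁻ y, F (t • (y - z) + z) ∂μ = ∫⁻ y, F (t • y + z) ∂μ :=
        lintegral_sub_right_eq_self (fun y => F (t • y + z)) z
    _ = ∫⁻ w, F (w + z) ∂(Measure.map (t • ·) μ) :=
        (lintegral_map (hF.comp (measurable_add_const z)) (measurable_const_smul t)).symm
    _ = ENNReal.ofReal |(t ^ finrank ℝ X)⁻¹| * ∫⁻ w, F (w + z) ∂μ := by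
        rw [Measure.map_addHaar_smul μ ht, lintegral_smul_measure, smul_eq_mul]
    _ = _ := by rw [lintegral_add_right_eq_self]

theorem setLIntegral_ball_comp_lineMap {F : X → ℝ≥0∞} (hF : Measurable F) (z : X) (r : ℝ)
    {t : ℝ} (ht : 0 < t) :
    ∫⁻ y in ball z r, F (lineMap z y t) ∂μ
      = ENNReal.ofReal (t ^ finrank ℝ X)⁻¹ * ∫⁻ w in ball z (t * r), F w ∂μ := by
  have hind : (ball z r).indicator (fun y => F (lineMap z y t))
      = fun y => (ball z (t * r)).indicator F (homothety z t y) := by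
    ext y
    simp only [indicator, mem_ball, homothety_eq_lineMap, dist_lineMap_left, Real.norm_eq_abs,
      abs_of_pos ht, mul_lt_mul_iff_right₀ ht, dist_comm z y]
  rw [← lintegral_indicator measurableSet_ball, ← lintegral_indicator measurableSet_ball, hind,
    lintegral_comp_homothety μ (hF.indicator measurableSet_ball) z ht.ne',
    abs_of_pos (inv_pos.2 (pow_pos ht _))]

theorem setLIntegral_ball_lintegral_lineMap {F : X → ℝ≥0∞} (hF : Measurable F) (z : X) (r : ℝ) :
    ∫⁻ y in ball z r, (∫⁻ t in Ioc (0 : ℝ) 1, F (lineMap z y t)) ∂μ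
      = ∫⁻ t in Ioc (0 : ℝ) 1,
          ENNReal.ofReal (t ^ finrank ℝ X)⁻¹ * ∫⁻ w in ball z (t * r), F w ∂μ := by
  rw [lintegral_lintegral_swap (measurable_uncurry_comp_lineMap hF z).aemeasurable]
  exact setLIntegral_congr_fun measurableSet_Ioc fun t ht =>
    setLIntegral_ball_comp_lineMap μ hF z r ht.1

theorem ae_ae_lineMap_notMem {T : Set X} (hT : μ T = 0) (z : X) (r : ℝ) :
    ∀ᵐ y ∂μ.restrict (ball z r), ∀ᵐ t ∂volume.restrict (Ioc (0 : ℝ) 1), lineMap z y t ∉ T := by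
  set F := (toMeasurable μ T).indicator (1 : X → ℝ≥0∞)
  have hF : Measurable F := measurable_one.indicator (measurableSet_toMeasurable μ T)
  have hzero : ∫⁻ y in ball z r, (∫⁻ t in Ioc (0 : ℝ) 1, F (lineMap z y t)) ∂μ = 0 := by
    rw [setLIntegral_ball_lintegral_lineMap μ hF]
    refine setLIntegral_eq_zero measurableSet_Ioc fun t _ => ?_
    rw [lintegral_indicator_one (measurableSet_toMeasurable μ T)]
    simp [Measure.restrict_apply (measurableSet_toMeasurable μ T),
      measure_mono_null inter_subset_left ((measure_toMeasurable T).trans hT)]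
  have hjoint := measurable_uncurry_comp_lineMap hF z
  filter_upwards [(lintegral_eq_zero_iff hjoint.lintegral_prod_right').1 hzero] with y hy
  filter_upwards [(lintegral_eq_zero_iff (hjoint.comp measurable_prodMk_left)).1 hy] with t ht hT
  simp [F, indicator_of_mem (subset_toMeasurable μ T hT)] at ht

theorem setLIntegral_ball_enorm_le_eLpNorm_mul {f : X → ℝ} (hf : AEStronglyMeasurable f μ)
    {p : ℝ≥0∞} (hp : 1 ≤ p) (z : X) {ρ r : ℝ} (hρ : 0 < ρ) (hρr : ρ ≤ r) :
    ∫⁻ w in ball z ρ, ‖f w‖ₑ ∂μ ≤ eLpNorm f p (μ.restrict (ball z r)) *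
      (ENNReal.ofReal (ρ ^ finrank ℝ X) * μ (ball 0 1)) ^ (1 - p.toReal⁻¹) := by
  calc ∫⁻ w in ball z ρ, ‖f w‖ₑ ∂μ = eLpNorm f 1 (μ.restrict (ball z ρ)) :=
        eLpNorm_one_eq_lintegral_enorm.symm
    _ ≤ eLpNorm f p (μ.restrict (ball z ρ)) * μ.restrict (ball z ρ) univ ^ (1 - p.toReal⁻¹) := by
        simpa using eLpNorm_le_eLpNorm_mul_rpow_measure_univ hp hf.restrict
    _ ≤ _ := by
        rw [Measure.restrict_apply_univ, Measure.addHaar_ball_of_pos μ z hρ]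
        gcongr

theorem ae_lintegral_enorm_comp_lineMap_lt_top {f : X → ℝ} (hf : Measurable f) {p : ℝ≥0∞}
    (hp1 : 1 ≤ p) (hp : (finrank ℝ X : ℝ≥0∞) < p) {z : X} {r : ℝ} (hr : 0 < r)
    (hfp : eLpNorm f p (μ.restrict (ball z r)) ≠ ∞) :
    ∀ᵐ y ∂μ.restrict (ball z r), ∫⁻ t in Ioc (0 : ℝ) 1, ‖f (lineMap z y t)‖ₑ < ∞ := by
  set m := finrank ℝ X
  -- For `p = ∞` the junk value `p.toReal⁻¹ = 0` is the correct Hölder exponent.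
  set β := p.toReal⁻¹
  have hβ : 0 ≤ 1 - β := sub_nonneg.2 (ENNReal.toReal_inv_le_one_of_one_le hp1)
  set C := eLpNorm f p (μ.restrict (ball z r)) * (ENNReal.ofReal (r ^ m) * μ (ball 0 1)) ^ (1 - β)
  have hC : C ≠ ∞ := ENNReal.mul_ne_top hfp
    (ENNReal.rpow_ne_top_of_nonneg hβ (ENNReal.mul_ne_top ENNReal.ofReal_ne_top
      measure_ball_lt_top.ne))
  have hbound : ∀ t ∈ Ioc (0 : ℝ) 1, ENNReal.ofReal (t ^ m)⁻¹ * ∫⁻ w in ball z (t * r), ‖f w‖ₑ ∂μ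
      ≤ C * ENNReal.ofReal (t ^ (-((m : ℝ) * β))) := by
    intro t ht
    calc ENNReal.ofReal (t ^ m)⁻¹ * ∫⁻ w in ball z (t * r), ‖f w‖ₑ ∂μ
        ≤ ENNReal.ofReal (t ^ m)⁻¹ * (eLpNorm f p (μ.restrict (ball z r)) *
            (ENNReal.ofReal ((t * r) ^ m) * μ (ball 0 1)) ^ (1 - β)) := by
          gcongr
          exact setLIntegral_ball_enorm_le_eLpNorm_mul μ hf.aestronglyMeasurable hp1 z
            (mul_pos ht.1 hr) (mul_le_of_le_one_left hr.le ht.2)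
      _ = C * (ENNReal.ofReal (t ^ m)⁻¹ * ENNReal.ofReal (t ^ m) ^ (1 - β)) := by
          rw [mul_pow, ENNReal.ofReal_mul (pow_nonneg ht.1.le m), mul_assoc,
            ENNReal.mul_rpow_of_nonneg _ _ hβ]
          ring
      _ = C * ENNReal.ofReal (t ^ (-((m : ℝ) * β))) := by
          rw [ENNReal.ofReal_pow_inv_mul_rpow ht.1]
  have hrpow : ∫⁻ t in Ioc (0 : ℝ) 1, ENNReal.ofReal (t ^ (-((m : ℝ) * β))) < ∞ := by
    have := intervalIntegral.intervalIntegrable_rpow' (a := 0) (b := 1)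
      (neg_lt_neg (ENNReal.natCast_mul_toReal_inv_lt_one hp))
    exact ((intervalIntegrable_iff_integrableOn_Ioc_of_le zero_le_one).1 this).lintegral_lt_top
  have hfin : ∫⁻ y in ball z r, (∫⁻ t in Ioc (0 : ℝ) 1, ‖f (lineMap z y t)‖ₑ) ∂μ < ∞ := by
    rw [setLIntegral_ball_lintegral_lineMap μ hf.enorm]
    calc _ ≤ ∫⁻ t in Ioc (0 : ℝ) 1, C * ENNReal.ofReal (t ^ (-((m : ℝ) * β))) :=
          setLIntegral_mono' measurableSet_Ioc hbound
      _ = C * ∫⁻ t in Ioc (0 : ℝ) 1, ENNReal.ofReal (t ^ (-((m : ℝ) * β))) :=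
          lintegral_const_mul' _ _ hC
      _ < ∞ := ENNReal.mul_lt_top hC.lt_top hrpow
  exact ae_lt_top (measurable_uncurry_comp_lineMap hf.enorm z).lintegral_prod_right' hfin.ne

theorem ae_integrableOn_comp_lineMap {K : X → ℝ} {p : ℝ≥0∞} (hp : (finrank ℝ X : ℝ≥0∞) < p)
    {z : X} {r : ℝ} (hr : 0 < r) (hK : MemLp K p (μ.restrict (ball z r))) :
    ∀ᵐ y ∂μ.restrict (ball z r), IntegrableOn (fun t => K (lineMap z y t)) (Icc (0 : ℝ) 1) := by
  rcases Nat.eq_zero_or_pos (finrank ℝ X) with h0 | hpos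
  · have : Subsingleton X := Module.finrank_zero_iff.1 h0
    refine Eventually.of_forall fun y => ?_
    simp only [Subsingleton.elim y z, lineMap_same_apply]
    exact integrableOn_const measure_Icc_lt_top.ne
  have hp1 : 1 ≤ p := le_trans (by exact_mod_cast hpos) hp.le
  set K₀ := hK.1.mk K
  have hK₀ : StronglyMeasurable K₀ := hK.1.stronglyMeasurable_mk
  have hKK₀ : K =ᵐ[μ.restrict (ball z r)] K₀ := hK.1.ae_eq_mk
  have hnull : μ ({x | K x ≠ K₀ x} ∩ ball z r) = 0 := by
    rw [← Measure.restrict_apply' measurableSet_ball]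
    exact hKK₀
  have hfin := ae_lintegral_enorm_comp_lineMap_lt_top μ hK₀.measurable hp1 hp hr
    (by rw [← eLpNorm_congr_ae hKK₀]; exact hK.2.ne)
  -- `K` is only a.e. equal to the measurable `K₀`, but almost every segment from `z` meets the
  -- exceptional null set at a null set of times.
  filter_upwards [hfin, ae_ae_lineMap_notMem μ hnull z r, ae_restrict_mem measurableSet_ball]
    with y hy_fin hy_ae hy
  rw [integrableOn_Icc_iff_integrableOn_Ioc]
  have hint₀ : IntegrableOn (fun t => K₀ (lineMap z y t)) (Ioc (0 : ℝ) 1) :=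
    ⟨(hK₀.measurable.comp lineMap_continuous.measurable).aestronglyMeasurable, hy_fin⟩
  refine hint₀.congr_fun_ae ?_
  filter_upwards [hy_ae, ae_restrict_mem measurableSet_Ioc] with t ht ht'
  by_contra hne
  exact ht ⟨Ne.symm hne,
    (convex_ball z r).lineMap_mem (mem_ball_self hr) hy (Ioc_subset_Icc_self ht')⟩

theorem eqOn_zero_of_norm_fderiv_le {E : Type*} [NormedAddCommGroup E] [NormedSpace ℝ E]
    {Z : X → E} {K : X → ℝ} {p : ℝ≥0∞} (hp : (finrank ℝ X : ℝ≥0∞) < p) {z : X} {r : ℝ}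
    (hr : 0 < r) (hZ : ∀ x ∈ ball z r, DifferentiableAt ℝ Z x)
    (hK : MemLp K p (μ.restrict (ball z r)))
    (hbound : ∀ x ∈ ball z r, ∀ v, ‖fderiv ℝ Z x v‖ ≤ K x * ‖Z x‖ * ‖v‖) (hz : Z z = 0) :
    EqOn Z 0 (ball z r) := by
  have hae : ∀ᵐ y ∂μ.restrict (ball z r), Z y = 0 := by
    filter_upwards [ae_integrableOn_comp_lineMap μ hp hr hK, ae_restrict_mem measurableSet_ball]
      with y hint hy
    have hseg : ∀ t ∈ Icc (0 : ℝ) 1, lineMap z y t ∈ ball z r := fun t ht =>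
      (convex_ball z r).lineMap_mem (mem_ball_self hr) hy ht
    have hray := eqOn_zero_of_norm_deriv_le_mul_norm (u := fun t => Z (lineMap z y t))
      (u' := fun t => fderiv ℝ Z (lineMap z y t) (y - z))
      (g := fun t => K (lineMap z y t) * ‖y - z‖)
      (fun t ht => (hZ _ (hseg t ht)).hasFDerivAt.comp_hasDerivAt t hasDerivAt_lineMap)
      (fun t ht => (hbound _ (hseg t ht) (y - z)).trans_eq (by ring))
      (hint.mul_const _) (by simpa using hz)
    simpa using hray (right_mem_Icc.2 zero_le_one)
  exact Measure.eqOn_open_of_ae_eq hae isOpen_ball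
    (fun x hx => (hZ x hx).continuousAt.continuousWithinAt) continuousOn_const

end Segments

theorem eventually_memLp_restrict_ball {X : Type*} [PseudoMetricSpace X] [MeasurableSpace X]
    {μ : Measure X} {f : X → ℝ} {p : ℝ≥0∞} {x : X} {r : ℝ} (hr : 0 < r)
    (hf : MemLp f p (μ.restrict (ball x r))) :
    ∀ᶠ ρ in 𝓝[>] (0 : ℝ), MemLp f p (μ.restrict (ball x ρ)) := by
  filter_upwards [Ioc_mem_nhdsGT hr] with ρ hρ
  exact hf.mono_measure (Measure.restrict_mono (ball_subset_ball hρ.2) le_rfl)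

theorem IsPreconnected.eqOn_of_eq_imp_eventuallyEq {α β : Type*} [TopologicalSpace α]
    [TopologicalSpace β] [T2Space β] {f g : α → β} {s : Set α} (hs : IsPreconnected s)
    (hf : ∀ x ∈ s, ContinuousAt f x) (hg : ∀ x ∈ s, ContinuousAt g x)
    (hloc : ∀ x ∈ s, f x = g x → f =ᶠ[𝓝 x] g) {x₀ : α} (hx₀ : x₀ ∈ s) (h₀ : f x₀ = g x₀) :
    EqOn f g s := by
  have hsub : s ⊆ {x | f =ᶠ[𝓝 x] g} := by
    refine hs.subset_of_closure_inter_subset isOpen_setOfPred_eventually_nhds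
      ⟨x₀, hx₀, hloc x₀ hx₀ h₀⟩ ?_
    rintro x ⟨hx_cl, hx⟩
    refine hloc x hx (not_not.1 fun hne => ?_)
    obtain ⟨y, hy_ne, hy_eq⟩ := mem_closure_iff_nhds.1 hx_cl _
      ((hf x hx).ne_iff_eventually_ne (hg x hx) |>.1 hne)
    exact hy_ne hy_eq.eq_of_nhds
  exact fun x hx => (hsub hx).eq_of_nhds

theorem LinearMap.norm_apply_le_sum_norm_apply_single {ι F : Type*} [Fintype ι] [DecidableEq ι]
    [SeminormedAddCommGroup F] [NormedSpace ℝ F] (L : (ι → ℝ) →ₗ[ℝ] F) (v : ι → ℝ) :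
    ‖L v‖ ≤ (∑ i, ‖L (Pi.single i 1)‖) * ‖v‖ := by
  have hv : ∀ i, Pi.single i (v i) = v i • (Pi.single i 1 : ι → ℝ) := fun i => by
    ext j; by_cases h : j = i <;> simp [h]
  calc ‖L v‖ = ‖∑ i, v i • L (Pi.single i 1)‖ := by
        conv_lhs => rw [← Finset.univ_sum_single v]
        simp only [map_sum, hv, map_smul]
    _ ≤ ∑ i, ‖v i‖ * ‖L (Pi.single i 1)‖ := (norm_sum_le _ _).trans
        (Finset.sum_le_sum fun i _ => (norm_smul _ _).le)
    _ ≤ ∑ i, ‖v‖ * ‖L (Pi.single i 1)‖ := Finset.sum_le_sum fun i _ =>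
        mul_le_mul_of_nonneg_right (norm_le_pi_norm v i) (norm_nonneg _)
    _ = (∑ i, ‖L (Pi.single i 1)‖) * ‖v‖ := by rw [← Finset.mul_sum, mul_comm]

attribute [local instance] Matrix.normedAddCommGroup Matrix.normedSpace

namespace Matrix

variable {ι κ : Type*}

theorem norm_mul_le_card_mul {l : Type*} [Fintype ι] [Fintype κ] [Fintype l]
    (A : Matrix ι κ ℝ) (B : Matrix κ l ℝ) : ‖A * B‖ ≤ Fintype.card κ * (‖A‖ * ‖B‖) := by
  refine (norm_le_iff (by positivity)).2 fun i j => ?_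
  calc ‖(A * B) i j‖ ≤ ∑ k, ‖A i k * B k j‖ := norm_sum_le _ _
    _ ≤ ∑ _k : κ, ‖A‖ * ‖B‖ := Finset.sum_le_sum fun k _ => (norm_mul_le _ _).trans
        (mul_le_mul (norm_entry_le_entrywise_sup_norm A) (norm_entry_le_entrywise_sup_norm B)
          (norm_nonneg _) (norm_nonneg _))
    _ = Fintype.card κ * (‖A‖ * ‖B‖) := by simp

theorem norm_transpose_mul_add_mul_le [Fintype ι] (A Z : Matrix ι ι ℝ) :
    ‖Aᵀ * Z + Z * A‖ ≤ 2 * Fintype.card ι * ‖A‖ * ‖Z‖ := by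
  calc ‖Aᵀ * Z + Z * A‖ ≤ ‖Aᵀ * Z‖ + ‖Z * A‖ := norm_add_le _ _
    _ ≤ Fintype.card ι * (‖Aᵀ‖ * ‖Z‖) + Fintype.card ι * (‖Z‖ * ‖A‖) :=
        add_le_add (norm_mul_le_card_mul _ _) (norm_mul_le_card_mul _ _)
    _ = 2 * Fintype.card ι * ‖A‖ * ‖Z‖ := by rw [norm_transpose]; ring

variable {E : Type*} [NormedAddCommGroup E] [NormedSpace ℝ E]

theorem differentiableAt_of_entries [Fintype κ] {F : E → Matrix ι κ ℝ} {x : E}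
    (hF : ∀ a b, DifferentiableAt ℝ (fun y => F y a b) x) : DifferentiableAt ℝ F x :=
  differentiableAt_pi.2 fun a => differentiableAt_pi.2 (hF a)

theorem fderiv_apply_entry [Fintype ι] [Fintype κ] {F : E → Matrix ι κ ℝ} {x : E}
    (hF : DifferentiableAt ℝ F x) (v : E) (a : ι) (b : κ) :
    fderiv ℝ (fun y => F y a b) x v = fderiv ℝ F x v a b := by
  have : HasFDerivAt (fun y => F y a b) (((ContinuousLinearMap.proj b).comp
      (ContinuousLinearMap.proj a)).comp (fderiv ℝ F x)) x :=
    ((ContinuousLinearMap.proj (R := ℝ) (φ := fun _ : κ => ℝ) b).comp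
      (ContinuousLinearMap.proj (R := ℝ) (φ := fun _ : ι => κ → ℝ) a)).hasFDerivAt.comp x
      hF.hasFDerivAt
  rw [this.fderiv]
  rfl

theorem fderiv_apply_eq_of_entries [Fintype ι] [Fintype κ] {F : E → Matrix ι κ ℝ} {x v : E}
    {M : Matrix ι κ ℝ} (hF : ∀ a b, DifferentiableAt ℝ (fun y => F y a b) x)
    (h : ∀ a b, fderiv ℝ (fun y => F y a b) x v = M a b) : fderiv ℝ F x v = M :=
  Matrix.ext fun a b => by rw [← fderiv_apply_entry (differentiableAt_of_entries hF), h]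

end Matrix

section Pfaff

variable {m : ℕ} {ι : Type*} [Fintype ι]

def SatisfiesPfaffAt (A : Fin m → Matrix ι ι ℝ) (Z : (Fin m → ℝ) → Matrix ι ι ℝ)
    (x : Fin m → ℝ) : Prop :=
  DifferentiableAt ℝ Z x ∧ ∀ i, fderiv ℝ Z x (Pi.single i 1) = (A i)ᵀ * Z x + Z x * A i

variable {A : Fin m → Matrix ι ι ℝ} {Y G Z : (Fin m → ℝ) → Matrix ι ι ℝ} {x : Fin m → ℝ}

theorem SatisfiesPfaffAt.of_entries (hd : ∀ a b, DifferentiableAt ℝ (fun y => Z y a b) x)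
    (heq : ∀ i a b, fderiv ℝ (fun y => Z y a b) x (Pi.single i 1)
      = ((A i)ᵀ * Z x + Z x * A i) a b) :
    SatisfiesPfaffAt A Z x :=
  ⟨Matrix.differentiableAt_of_entries hd, fun i => Matrix.fderiv_apply_eq_of_entries hd (heq i)⟩

theorem SatisfiesPfaffAt.sub (hY : SatisfiesPfaffAt A Y x) (hG : SatisfiesPfaffAt A G x) :
    SatisfiesPfaffAt A (fun y => Y y - G y) x := by
  refine ⟨hY.1.sub hG.1, fun i => ?_⟩
  have hsub : fderiv ℝ (fun y => Y y - G y) x = fderiv ℝ Y x - fderiv ℝ G x :=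
    fderiv_fun_sub hY.1 hG.1
  rw [hsub, _root_.sub_apply, hY.2 i, hG.2 i]
  noncomm_ring

theorem SatisfiesPfaffAt.norm_fderiv_apply_le (hZ : SatisfiesPfaffAt A Z x) (v : Fin m → ℝ) :
    ‖fderiv ℝ Z x v‖ ≤ (∑ i, 2 * Fintype.card ι * ‖A i‖) * ‖Z x‖ * ‖v‖ := by
  refine ((fderiv ℝ Z x).toLinearMap.norm_apply_le_sum_norm_apply_single v).trans ?_
  gcongr
  simp only [ContinuousLinearMap.coe_coe, hZ.2, Finset.sum_mul]
  exact Finset.sum_le_sum fun i _ => Matrix.norm_transpose_mul_add_mul_le (A i) (Z x)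

theorem eventually_memLp_sum_norm_restrict_ball {X : Type*} [PseudoMetricSpace X]
    [MeasurableSpace X] {μ : Measure X} {p : ℝ≥0∞} {C : Fin m → X → Matrix ι ι ℝ} {x : X}
    (hC : ∀ i a b, ∃ r > 0, MemLp (fun y => C i y a b) p (μ.restrict (ball x r))) (c : ℝ) :
    ∀ᶠ ρ in 𝓝[>] (0 : ℝ), MemLp (fun y => ∑ i, c * ‖C i y‖) p (μ.restrict (ball x ρ)) := by
  have hentries : ∀ᶠ ρ in 𝓝[>] (0 : ℝ),
      ∀ i a b, MemLp (fun y => C i y a b) p (μ.restrict (ball x ρ)) :=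
    eventually_all.2 fun i => eventually_all.2 fun a => eventually_all.2 fun b =>
      let ⟨_, hr, hmem⟩ := hC i a b
      eventually_memLp_restrict_ball hr hmem
  filter_upwards [hentries] with ρ hmem
  exact memLp_finsetSum _ fun i _ =>
    (MemLp.of_eval fun a => MemLp.of_eval fun b => hmem i a b).norm.const_mul c

end Pfaff

theorem pfaff_uniqueness_general (m n : ℕ) (p : ℝ≥0∞) (hp : (m : ℝ≥0∞) < p)
    (Ω : Set (Fin m → ℝ)) (hΩ : IsOpen Ω) (hconn : IsConnected Ω)
    (Y G : (Fin m → ℝ) → Matrix (Fin (n + 1)) (Fin (n + 1)) ℝ)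
    (C : Fin m → (Fin m → ℝ) → Matrix (Fin (n + 1)) (Fin (n + 1)) ℝ)
    (hC : ∀ i a b, ∀ x ∈ Ω, ∃ r > 0, Metric.ball x r ⊆ Ω ∧
      MeasureTheory.MemLp (fun y => C i y a b) p (volume.restrict (Metric.ball x r)))
    (hYd : ∀ x ∈ Ω, ∀ a b, DifferentiableAt ℝ (fun y => Y y a b) x)
    (hGd : ∀ x ∈ Ω, ∀ a b, DifferentiableAt ℝ (fun y => G y a b) x)
    (hYeq : ∀ x ∈ Ω, ∀ i, ∀ a b : Fin (n + 1),
      fderiv ℝ (fun y => Y y a b) x (Pi.single i 1)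
        = ((C i x)ᵀ * Y x + Y x * C i x) a b)
    (hGeq : ∀ x ∈ Ω, ∀ i, ∀ a b : Fin (n + 1),
      fderiv ℝ (fun y => G y a b) x (Pi.single i 1)
        = ((C i x)ᵀ * G x + G x * C i x) a b)
    (x₀ : Fin m → ℝ) (hx₀ : x₀ ∈ Ω) (hinit : Y x₀ = G x₀) :
    ∀ x ∈ Ω, Y x = G x := by
  have hY : ∀ x ∈ Ω, SatisfiesPfaffAt (fun i => C i x) Y x := fun x hx =>
    .of_entries (hYd x hx) (hYeq x hx)
  have hG : ∀ x ∈ Ω, SatisfiesPfaffAt (fun i => C i x) G x := fun x hx =>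
    .of_entries (hGd x hx) (hGeq x hx)
  refine fun x hx => hconn.isPreconnected.eqOn_of_eq_imp_eventuallyEq
    (fun x hx => (hY x hx).1.continuousAt) (fun x hx => (hG x hx).1.continuousAt)
    (fun z hz hYG => ?_) hx₀ hinit hx
  obtain ⟨ε, hε, hεΩ⟩ := Metric.isOpen_iff.1 hΩ z hz
  obtain ⟨r, hK, hrε, hr⟩ := ((eventually_memLp_sum_norm_restrict_ball
    (fun i a b => (hC i a b z hz).imp fun _ h => ⟨h.1, h.2.2⟩)
    (2 * Fintype.card (Fin (n + 1)))).and
    (Filter.Eventually.and (Ioc_mem_nhdsGT hε) self_mem_nhdsWithin)).exists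
  have hsub : ball z r ⊆ Ω := (ball_subset_ball hrε.2).trans hεΩ
  have hZ : ∀ x ∈ ball z r, SatisfiesPfaffAt (fun i => C i x) (fun y => Y y - G y) x :=
    fun x hx => (hY x (hsub hx)).sub (hG x (hsub hx))
  have hzero := eqOn_zero_of_norm_fderiv_le volume (by simpa using hp) hr
    (fun x hx => (hZ x hx).1) hK (fun x hx => (hZ x hx).norm_fderiv_apply_le) (sub_eq_zero.2 hYG)
  filter_upwards [isOpen_ball.mem_nhds (mem_ball_self hr)] with y hy
  exact sub_eq_zero.1 (hzero hy)

/-- **uniqueness for the Pfaff-type system `∂_i Z = C_iᵀ Z + Z C_i`.**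
Let `Ω ⊂ ℝ^m` be open and connected, `p > m`, and let `Y` and the symmetric matrix field
`G` both solve `∂_i Z = C_iᵀ Z + Z C_i` on `Ω`, with coefficients `C_i` of class
`L^p_loc(Ω)` (solutions of class `W^{1,p}_loc`, rendered here by differentiability of
their entries on `Ω`).  If `Y(x⋆) = G(x⋆)` at some `x⋆ ∈ Ω`, then `Y = G` on `Ω`. -/
theorem pfaff_uniqueness (m n : ℕ) (p : ℝ≥0∞) (hp : (m : ℝ≥0∞) < p)
    (Ω : Set (Fin m → ℝ)) (hΩ : IsOpen Ω) (hconn : IsConnected Ω)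
    (Y G : (Fin m → ℝ) → Matrix (Fin (n + 1)) (Fin (n + 1)) ℝ)
    (C : Fin m → (Fin m → ℝ) → Matrix (Fin (n + 1)) (Fin (n + 1)) ℝ)
    (hGsym : ∀ x ∈ Ω, (G x)ᵀ = G x)
    (hC : ∀ i a b, ∀ x ∈ Ω, ∃ r > 0, Metric.ball x r ⊆ Ω ∧
      MeasureTheory.MemLp (fun y => C i y a b) p (volume.restrict (Metric.ball x r)))
    (hYd : ∀ x ∈ Ω, ∀ a b, DifferentiableAt ℝ (fun y => Y y a b) x)
    (hGd : ∀ x ∈ Ω, ∀ a b, DifferentiableAt ℝ (fun y => G y a b) x)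
    (hYeq : ∀ x ∈ Ω, ∀ i, ∀ a b : Fin (n + 1),
      fderiv ℝ (fun y => Y y a b) x (Pi.single i 1)
        = ((C i x)ᵀ * Y x + Y x * C i x) a b)
    (hGeq : ∀ x ∈ Ω, ∀ i, ∀ a b : Fin (n + 1),
      fderiv ℝ (fun y => G y a b) x (Pi.single i 1)
        = ((C i x)ᵀ * G x + G x * C i x) a b)
    (x₀ : Fin m → ℝ) (hx₀ : x₀ ∈ Ω) (hinit : Y x₀ = G x₀) :
    ∀ x ∈ Ω, Y x = G x :=
  pfaff_uniqueness_general m n p hp Ω hΩ hconn Y G C hC hYd hGd hYeq hGeq x₀ hx₀ hinit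
end
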